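/- arXiv:2308.03455 — 10 statements merged into one kernel-verified Lean document; each statement's English description precedes it below -/
import Mathlib

section
/- Let W ⊆ [α,β] be an open interval such that g(W) = (b_{i−1}, b_i) for some i ∈ {1,…,ℓ}. Then g is strictly monotone on W. -/
theorem stmt0
    (α β : ℝ) (hαβ : α < β)
    (k : ℕ) (hk : 0 < k)
    (a : ℕ → ℝ) (ha0 : a 0 = α) (hak : a k = β)
    (hamono : ∀ j < k, a j < a (j + 1))
    (g g' : ℝ → ℝ)
    (hderiv : ∀ x ∈ Set.Icc α β, HasDerivWithinAt g (g' x) (Set.Icc α β) x)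
    (hg'cont : ContinuousOn g' (Set.Icc α β))
    (hpiece : ∀ j, 1 ≤ j → j ≤ k →
      StrictMonoOn g (Set.Ioo (a (j - 1)) (a j)) ∨ StrictAntiOn g (Set.Ioo (a (j - 1)) (a j)))
    (hg'ne : ∀ j, 1 ≤ j → j ≤ k → ∀ x ∈ Set.Ioo (a (j - 1)) (a j), g' x ≠ 0)
    (hcrit : ∀ j, 0 < j → j < k → g' (a j) = 0 ∧
      ((∀ᶠ x in nhdsWithin (a j) (Set.Icc α β \ {a j}), g x < g (a j)) ∨
       (∀ᶠ x in nhdsWithin (a j) (Set.Icc α β \ {a j}), g (a j) < g x)))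
    (ℓ : ℕ) (b : ℕ → ℝ)
    (hbmono : ∀ i < ℓ, b i < b (i + 1))
    (hB : g '' {x | ∃ j ≤ k, a j = x} = {y | ∃ i ≤ ℓ, b i = y})
    (i : ℕ) (hi1 : 1 ≤ i) (hiℓ : i ≤ ℓ)
    (W : Set ℝ) (hWsub : W ⊆ Set.Icc α β)
    (hWint : ∃ p q : ℝ, W = Set.Ioo p q)
    (hgW : g '' W = Set.Ioo (b (i - 1)) (b i)) :
    StrictMonoOn g W ∨ StrictAntiOn g W := by

  obtain ⟨p, q, hpq⟩ := hWint
  -- b is monotone on 0..ℓ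
  have bmono : ∀ m n : ℕ, m ≤ n → n ≤ ℓ → b m ≤ b n := by
    intro m n hmn hn
    induction n with
    | zero => simp_all
    | succ n ih =>
      rcases Nat.lt_or_ge m (n + 1) with h | h
      · exact le_trans (ih (by omega) (by omega)) (le_of_lt (hbmono n (by omega)))
      · have : m = n + 1 := le_antisymm hmn h
        subst this; exact le_refl _
  have hbi : b (i - 1) < b i := by
    have := hbmono (i - 1) (by omega)
    have he : i - 1 + 1 = i := by omega
    rwa [he] at this
  -- no partition point lies in W
  have hnotW : ∀ m ≤ k, a m ∉ W := by
    intro m hm hmem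
    have h1 : g (a m) ∈ g '' W := ⟨a m, hmem, rfl⟩
    rw [hgW] at h1
    have h2 : g (a m) ∈ g '' {x | ∃ j ≤ k, a j = x} := ⟨a m, ⟨m, hm, rfl⟩, rfl⟩
    rw [hB] at h2
    obtain ⟨n, hn, hbn⟩ := h2
    rcases Nat.lt_or_ge n i with h | h
    · have : b n ≤ b (i - 1) := bmono n (i - 1) (by omega) (by omega)
      have := h1.1
      linarith [hbn ▸ this]
    · have : b i ≤ b n := bmono i n h hn
      have := h1.2
      linarith [hbn ▸ this]
  -- W is nonempty
  have hWne : W.Nonempty := by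
    by_contra h
    rw [Set.not_nonempty_iff_eq_empty] at h
    rw [h, Set.image_empty] at hgW
    have : b (i - 1) < b i := hbi
    have : (Set.Ioo (b (i - 1)) (b i)).Nonempty := Set.nonempty_Ioo.2 hbi
    rw [← hgW] at this
    exact this.ne_empty rfl
  obtain ⟨x, hxW⟩ := hWne
  have hxIcc : x ∈ Set.Icc α β := hWsub hxW
  have hxne : ∀ m ≤ k, x ≠ a m := fun m hm h => hnotW m hm (h ▸ hxW)
  -- find the subinterval containing x
  have key : ∀ n, n ≤ k → x < a n → ∃ j, j < k ∧ a j < x ∧ x < a (j + 1) := by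
    intro n
    induction n with
    | zero =>
      intro _ h
      rw [ha0] at h
      exact absurd h (not_lt.2 hxIcc.1)
    | succ n ih =>
      intro hn h
      rcases lt_or_ge x (a n) with h' | h'
      · exact ih (by omega) h'
      · have hlt : a n < x := lt_of_le_of_ne h' fun he => hxne n (by omega) he.symm
        exact ⟨n, by omega, hlt, h⟩
  have hxβ : x < a k := by
    rw [hak]
    exact lt_of_le_of_ne hxIcc.2 (by rw [← hak]; exact hxne k le_rfl)
  obtain ⟨j, hjk, hjx, hxj⟩ := key k le_rfl hxβ
  -- W is contained in Ioo (a j) (a (j+1))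
  have hWsub' : W ⊆ Set.Ioo (a j) (a (j + 1)) := by
    intro y hy
    rw [hpq] at hy hxW
    constructor
    · by_contra h
      push_neg at h
      have : a j ∈ Set.Ioo p q := ⟨lt_of_lt_of_le hy.1 h, lt_trans hjx hxW.2⟩
      exact hnotW j (by omega) (hpq ▸ this)
    · by_contra h
      push_neg at h
      have : a (j + 1) ∈ Set.Ioo p q := ⟨lt_trans hxW.1 hxj, lt_of_le_of_lt h hy.2⟩
      exact hnotW (j + 1) (by omega) (hpq ▸ this)
  have := hpiece (j + 1) (by omega) (by omega)
  simp only [Nat.add_sub_cancel] at this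
  rcases this with h | h
  · exact Or.inl (h.mono hWsub')
  · exact Or.inr (h.mono hWsub')
end

section
/- Fix i ∈ {1,…,ℓ} and let c_i = (b_{i−1}+b_i)/2. Write g⁻¹({c_i}) = {γ_1 < ⋯ < γ_p}, and for each s = 1,…,p let W_s be a maximal open interval containing γ_s with g(W_s) = (b_{i−1}, b_i). Then the intervals W_1,…,W_p are pairwise disjoint and g⁻¹((b_{i−1}, b_i)) = W_1 ∪ ⋯ ∪ W_p. -/
open Topology Filter


lemma chainLt (f : ℕ → ℝ) (c0 n : ℕ) (h : ∀ j, c0 ≤ j → j < n → f j < f (j+1))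
    {m m' : ℕ} (h1 : c0 ≤ m) (h2 : m < m') (h3 : m' ≤ n) : f m < f m' := by
  induction m' with
  | zero => omega
  | succ q ih =>
    rcases Nat.lt_or_ge m q with hq | hq
    · exact (ih hq (by omega)).trans (h q (by omega) (by omega))
    · have hmq : m = q := by omega
      subst hmq
      exact h m h1 (by omega)

lemma chainLe (f : ℕ → ℝ) (c0 n : ℕ) (h : ∀ j, c0 ≤ j → j < n → f j < f (j+1))
    {m m' : ℕ} (h1 : c0 ≤ m) (h2 : m ≤ m') (h3 : m' ≤ n) : f m ≤ f m' := by
  rcases Nat.lt_or_ge m m' with hh | hh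
  · exact (chainLt f c0 n h h1 hh h3).le
  · have : m = m' := by omega
    simp [this]

lemma coverLemma (f : ℕ → ℝ) (k : ℕ) (hk : 0 < k) {x : ℝ}
    (hx1 : f 0 ≤ x) (hx2 : x ≤ f k) :
    ∃ j, 1 ≤ j ∧ j ≤ k ∧ f (j-1) ≤ x ∧ x ≤ f j := by
  induction k with
  | zero => omega
  | succ n ih =>
    rcases le_or_gt x (f n) with hle | hlt
    · rcases Nat.eq_zero_or_pos n with h0 | h0
      · subst h0
        exact ⟨1, le_refl 1, le_refl 1, by simpa using hx1, hx2⟩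
      · obtain ⟨j, hj1, hj2, hj3, hj4⟩ := ih h0 hle
        exact ⟨j, hj1, by omega, hj3, hj4⟩
    · exact ⟨n+1, by omega, le_refl _, by simpa using hlt.le, hx2⟩

lemma strictMonoOn_Icc_of_Ioo {f : ℝ → ℝ} {P Q : ℝ} (hPQ : P < Q)
    (hc : ContinuousOn f (Set.Icc P Q)) (hm : StrictMonoOn f (Set.Ioo P Q)) :
    StrictMonoOn f (Set.Icc P Q) := by
  have hne : (𝓝[Set.Ioo P Q] P).NeBot := by
    rw [← mem_closure_iff_nhdsWithin_neBot, closure_Ioo hPQ.ne]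
    exact Set.left_mem_Icc.2 hPQ.le
  have hne' : (𝓝[Set.Ioo P Q] Q).NeBot := by
    rw [← mem_closure_iff_nhdsWithin_neBot, closure_Ioo hPQ.ne]
    exact Set.right_mem_Icc.2 hPQ.le
  have hlim : ∀ m ∈ Set.Ioo P Q, f P ≤ f m := by
    intro m hm'
    have ht : Filter.Tendsto f (𝓝[Set.Ioo P Q] P) (𝓝 (f P)) :=
      (hc.continuousWithinAt (Set.left_mem_Icc.2 hPQ.le)).mono_left
        (nhdsWithin_mono _ Set.Ioo_subset_Icc_self)
    refine le_of_tendsto ht ?_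
    have hev : ∀ᶠ s in 𝓝[Set.Ioo P Q] P, s < m :=
      eventually_nhdsWithin_of_eventually_nhds (eventually_lt_nhds hm'.1)
    filter_upwards [hev, self_mem_nhdsWithin] with s hs1 hs2
    exact (hm hs2 hm' hs1).le
  have hlim' : ∀ m ∈ Set.Ioo P Q, f m ≤ f Q := by
    intro m hm'
    have ht : Filter.Tendsto f (𝓝[Set.Ioo P Q] Q) (𝓝 (f Q)) :=
      (hc.continuousWithinAt (Set.right_mem_Icc.2 hPQ.le)).mono_left
        (nhdsWithin_mono _ Set.Ioo_subset_Icc_self)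
    refine ge_of_tendsto ht ?_
    have hev : ∀ᶠ s in 𝓝[Set.Ioo P Q] Q, m < s :=
      eventually_nhdsWithin_of_eventually_nhds (eventually_gt_nhds hm'.2)
    filter_upwards [hev, self_mem_nhdsWithin] with s hs1 hs2
    exact (hm hm' hs2 hs1).le
  have hPlt : ∀ t ∈ Set.Ioo P Q, f P < f t := by
    intro t ht
    have hmid : (P + t) / 2 ∈ Set.Ioo P Q := ⟨by linarith [ht.1], by linarith [ht.1, ht.2]⟩
    exact lt_of_le_of_lt (hlim _ hmid) (hm hmid ht (by linarith [ht.1]))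
  have hQgt : ∀ t ∈ Set.Ioo P Q, f t < f Q := by
    intro t ht
    have hmid : (t + Q) / 2 ∈ Set.Ioo P Q := ⟨by linarith [ht.1, ht.2], by linarith [ht.2]⟩
    exact lt_of_lt_of_le (hm ht hmid (by linarith [ht.2])) (hlim' _ hmid)
  intro x hx y hy hxy
  rcases eq_or_lt_of_le hx.1 with hxP | hxP
  · rcases eq_or_lt_of_le hy.2 with hyQ | hyQ
    · have hmid : (P + Q) / 2 ∈ Set.Ioo P Q := ⟨by linarith, by linarith⟩
      rw [← hxP, hyQ]
      exact (hPlt _ hmid).trans (hQgt _ hmid)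
    · rw [← hxP]
      exact hPlt y ⟨lt_of_le_of_lt hx.1 hxy, hyQ⟩
  · rcases eq_or_lt_of_le hy.2 with hyQ | hyQ
    · rw [hyQ]
      exact hQgt x ⟨hxP, lt_of_lt_of_le hxy hy.2⟩
    · exact hm ⟨hxP, hxy.trans_le hy.2 |>.trans_le (le_refl _)⟩ ⟨hxP.trans hxy, hyQ⟩ hxy

lemma strictAntiOn_Icc_of_Ioo {f : ℝ → ℝ} {P Q : ℝ} (hPQ : P < Q)
    (hc : ContinuousOn f (Set.Icc P Q)) (hm : StrictAntiOn f (Set.Ioo P Q)) :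
    StrictAntiOn f (Set.Icc P Q) := by
  have h := strictMonoOn_Icc_of_Ioo hPQ hc.neg (fun x hx y hy hxy => neg_lt_neg (hm hx hy hxy))
  intro x hx y hy hxy
  have := h hx hy hxy
  simpa using this

lemma aux_mono {f : ℝ → ℝ} {P Q B1 B2 x : ℝ}
    (hc : ContinuousOn f (Set.Icc P Q))
    (hm : StrictMonoOn f (Set.Icc P Q))
    (hx : x ∈ Set.Ioo P Q) (hgx1 : B1 < f x) (hgx2 : f x < B2)
    (hP : f P ≤ B1) (hQ : B2 ≤ f Q) :
    ∃ u v, u < x ∧ x < v ∧ Set.Ioo u v ⊆ Set.Icc P Q ∧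
      f '' Set.Ioo u v = Set.Ioo B1 B2 := by
  have hPx : P ≤ x := hx.1.le
  have hxQ : x ≤ Q := hx.2.le
  obtain ⟨u, hu, hfu⟩ : ∃ u ∈ Set.Icc P x, f u = B1 :=
    intermediate_value_Icc hPx (hc.mono (Set.Icc_subset_Icc_right hxQ)) ⟨hP, hgx1.le⟩
  obtain ⟨v, hv, hfv⟩ : ∃ v ∈ Set.Icc x Q, f v = B2 :=
    intermediate_value_Icc hxQ (hc.mono (Set.Icc_subset_Icc_left hPx)) ⟨hgx2.le, hQ⟩
  have hux : u < x := lt_of_le_of_ne hu.2 (by rintro rfl; exact absurd hfu hgx1.ne')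
  have hxv : x < v := lt_of_le_of_ne hv.1 (by rintro rfl; exact absurd hfv hgx2.ne)
  have hsub : Set.Ioo u v ⊆ Set.Icc P Q := fun z hz =>
    ⟨hu.1.trans hz.1.le, hz.2.le.trans hv.2⟩
  refine ⟨u, v, hux, hxv, hsub, Set.Subset.antisymm ?_ ?_⟩
  · rintro _ ⟨z, hz, rfl⟩
    have huI : u ∈ Set.Icc P Q := ⟨hu.1, hu.2.trans hxQ⟩
    have hvI : v ∈ Set.Icc P Q := ⟨hPx.trans hv.1, hv.2⟩
    exact ⟨hfu ▸ hm huI (hsub hz) hz.1, hfv ▸ hm (hsub hz) hvI hz.2⟩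
  · have := intermediate_value_Ioo (hux.trans hxv).le (hc.mono (Set.Icc_subset_Icc hu.1 hv.2))
    rw [hfu, hfv] at this
    exact this

lemma aux_anti {f : ℝ → ℝ} {P Q B1 B2 x : ℝ}
    (hc : ContinuousOn f (Set.Icc P Q))
    (hm : StrictAntiOn f (Set.Icc P Q))
    (hx : x ∈ Set.Ioo P Q) (hgx1 : B1 < f x) (hgx2 : f x < B2)
    (hP : B2 ≤ f P) (hQ : f Q ≤ B1) :
    ∃ u v, u < x ∧ x < v ∧ Set.Ioo u v ⊆ Set.Icc P Q ∧
      f '' Set.Ioo u v = Set.Ioo B1 B2 := by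
  have hPx : P ≤ x := hx.1.le
  have hxQ : x ≤ Q := hx.2.le
  obtain ⟨u, hu, hfu⟩ : ∃ u ∈ Set.Icc P x, f u = B2 :=
    intermediate_value_Icc' hPx (hc.mono (Set.Icc_subset_Icc_right hxQ)) ⟨hgx2.le, hP⟩
  obtain ⟨v, hv, hfv⟩ : ∃ v ∈ Set.Icc x Q, f v = B1 :=
    intermediate_value_Icc' hxQ (hc.mono (Set.Icc_subset_Icc_left hPx)) ⟨hQ, hgx1.le⟩
  have hux : u < x := lt_of_le_of_ne hu.2 (by rintro rfl; exact absurd hfu hgx2.ne)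
  have hxv : x < v := lt_of_le_of_ne hv.1 (by rintro rfl; exact absurd hfv hgx1.ne')
  have hsub : Set.Ioo u v ⊆ Set.Icc P Q := fun z hz =>
    ⟨hu.1.trans hz.1.le, hz.2.le.trans hv.2⟩
  refine ⟨u, v, hux, hxv, hsub, Set.Subset.antisymm ?_ ?_⟩
  · rintro _ ⟨z, hz, rfl⟩
    have huI : u ∈ Set.Icc P Q := ⟨hu.1, hu.2.trans hxQ⟩
    have hvI : v ∈ Set.Icc P Q := ⟨hPx.trans hv.1, hv.2⟩
    exact ⟨hfv ▸ hm (hsub hz) hvI hz.2, hfu ▸ hm huI (hsub hz) hz.1⟩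
  · have := intermediate_value_Ioo' (hux.trans hxv).le (hc.mono (Set.Icc_subset_Icc hu.1 hv.2))
    rw [hfu, hfv] at this
    exact this

theorem stmt1
    (α β : ℝ) (hαβ : α < β)
    (k : ℕ) (hk : 0 < k)
    (a : ℕ → ℝ) (ha0 : a 0 = α) (hak : a k = β)
    (hamono : ∀ j < k, a j < a (j + 1))
    (g g' : ℝ → ℝ)
    (hderiv : ∀ x ∈ Set.Icc α β, HasDerivWithinAt g (g' x) (Set.Icc α β) x)
    (hg'cont : ContinuousOn g' (Set.Icc α β))
    (hpiece : ∀ j, 1 ≤ j → j ≤ k →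
      StrictMonoOn g (Set.Ioo (a (j - 1)) (a j)) ∨ StrictAntiOn g (Set.Ioo (a (j - 1)) (a j)))
    (hg'ne : ∀ j, 1 ≤ j → j ≤ k → ∀ x ∈ Set.Ioo (a (j - 1)) (a j), g' x ≠ 0)
    (hcrit : ∀ j, 0 < j → j < k → g' (a j) = 0 ∧
      ((∀ᶠ x in nhdsWithin (a j) (Set.Icc α β \ {a j}), g x < g (a j)) ∨
       (∀ᶠ x in nhdsWithin (a j) (Set.Icc α β \ {a j}), g (a j) < g x)))
    (ℓ : ℕ) (b : ℕ → ℝ)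
    (hbmono : ∀ i < ℓ, b i < b (i + 1))
    (hB : g '' {x | ∃ j ≤ k, a j = x} = {y | ∃ i ≤ ℓ, b i = y})
    (i : ℕ) (hi1 : 1 ≤ i) (hiℓ : i ≤ ℓ)
    (p : ℕ) (hp : 0 < p) (γ : ℕ → ℝ)
    (hγmono : ∀ s, 1 ≤ s → s < p → γ s < γ (s + 1))
    (hfiber : {x ∈ Set.Icc α β | g x = (b (i - 1) + b i) / 2} =
      {x | ∃ s, 1 ≤ s ∧ s ≤ p ∧ γ s = x})
    (W : ℕ → Set ℝ)
    (hWsub : ∀ s, 1 ≤ s → s ≤ p → W s ⊆ Set.Icc α β)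
    (hWmem : ∀ s, 1 ≤ s → s ≤ p → γ s ∈ W s)
    (hWint : ∀ s, 1 ≤ s → s ≤ p → ∃ u v : ℝ, W s = Set.Ioo u v)
    (hWimg : ∀ s, 1 ≤ s → s ≤ p → g '' W s = Set.Ioo (b (i - 1)) (b i))
    (hWmax : ∀ s, 1 ≤ s → s ≤ p → ∀ V : Set ℝ, V ⊆ Set.Icc α β →
      (∃ u v : ℝ, V = Set.Ioo u v) → W s ⊆ V →
      g '' V = Set.Ioo (b (i - 1)) (b i) → V = W s)
 :
    (∀ s r, 1 ≤ s → s ≤ p → 1 ≤ r → r ≤ p → s ≠ r → Disjoint (W s) (W r)) ∧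
    {x ∈ Set.Icc α β | g x ∈ Set.Ioo (b (i - 1)) (b i)} = ⋃ s ∈ Set.Icc 1 p, W s := by
  set c := (b (i - 1) + b i) / 2 with hc_def
  have hbi : b (i-1) < b i := by
    have h := hbmono (i-1) (by omega)
    have e : i - 1 + 1 = i := by omega
    rwa [e] at h
  have hcont : ContinuousOn g (Set.Icc α β) := fun x hx => (hderiv x hx).continuousWithinAt
  have hBmem : ∀ j, j ≤ k → ∃ m, m ≤ ℓ ∧ b m = g (a j) := by
    intro j hj
    have h : g (a j) ∈ g '' {x | ∃ j ≤ k, a j = x} := ⟨a j, ⟨j, hj, rfl⟩, rfl⟩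
    rw [hB] at h
    obtain ⟨m, hm, hbm⟩ := h
    exact ⟨m, hm, hbm⟩
  have hble : ∀ m, m ≤ ℓ → b m < b i → b m ≤ b (i-1) := by
    intro m hm hlt
    rcases Nat.lt_or_ge m i with h | h
    · exact chainLe b 0 ℓ (fun j _ hj => hbmono j hj) (Nat.zero_le _) (by omega) (by omega)
    · exact absurd hlt (not_lt.2 (chainLe b 0 ℓ (fun j _ hj => hbmono j hj) (Nat.zero_le _) h hm))
  have hbge : ∀ m, m ≤ ℓ → b (i-1) < b m → b i ≤ b m := by
    intro m hm hlt
    rcases Nat.lt_or_ge m i with h | h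
    · exact absurd hlt (not_lt.2 (chainLe b 0 ℓ (fun j _ hj => hbmono j hj) (Nat.zero_le _) (by omega) (by omega)))
    · exact chainLe b 0 ℓ (fun j _ hj => hbmono j hj) (Nat.zero_le _) h hm
  have hgaB : ∀ j, j ≤ k → g (a j) ∉ Set.Ioo (b (i-1)) (b i) := by
    intro j hj hmem
    obtain ⟨m, hm, hbm⟩ := hBmem j hj
    rw [← hbm] at hmem
    exact absurd (hble m hm hmem.2) (not_le.2 hmem.1)
  have ha_le : ∀ m m', m ≤ m' → m' ≤ k → a m ≤ a m' :=
    fun m m' h1 h2 => chainLe a 0 k (fun j _ hj => hamono j hj) (Nat.zero_le _) h1 h2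
  have haIcc : ∀ j, 1 ≤ j → j ≤ k → Set.Icc (a (j-1)) (a j) ⊆ Set.Icc α β := by
    intro j h1 h2
    rw [← ha0, ← hak]
    exact Set.Icc_subset_Icc (ha_le 0 (j-1) (Nat.zero_le _) (by omega)) (ha_le j k h2 le_rfl)
  have hajlt : ∀ j, 1 ≤ j → j ≤ k → a (j-1) < a j := by
    intro j h1 h2
    have h := hamono (j-1) (by omega)
    have e : j - 1 + 1 = j := by omega
    rwa [e] at h
  have hpieceC : ∀ j, 1 ≤ j → j ≤ k →
      StrictMonoOn g (Set.Icc (a (j-1)) (a j)) ∨ StrictAntiOn g (Set.Icc (a (j-1)) (a j)) := by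
    intro j h1 h2
    rcases hpiece j h1 h2 with h | h
    · exact Or.inl (strictMonoOn_Icc_of_Ioo (hajlt j h1 h2) (hcont.mono (haIcc j h1 h2)) h)
    · exact Or.inr (strictAntiOn_Icc_of_Ioo (hajlt j h1 h2) (hcont.mono (haIcc j h1 h2)) h)
  have hWval : ∀ s, 1 ≤ s → s ≤ p → ∀ x ∈ W s, g x ∈ Set.Ioo (b (i-1)) (b i) := by
    intro s h1 h2 x hx
    rw [← hWimg s h1 h2]
    exact ⟨x, hx, rfl⟩
  have hγfib : ∀ s, 1 ≤ s → s ≤ p → γ s ∈ Set.Icc α β ∧ g (γ s) = c := by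
    intro s h1 h2
    have h : γ s ∈ {x | ∃ s', 1 ≤ s' ∧ s' ≤ p ∧ γ s' = x} := ⟨s, h1, h2, rfl⟩
    rw [← hfiber] at h
    exact h
  have hcmem : c ∈ Set.Ioo (b (i-1)) (b i) :=
    ⟨by rw [hc_def]; linarith, by rw [hc_def]; linarith⟩
  have hWpiece : ∀ s, 1 ≤ s → s ≤ p → ∃ j, 1 ≤ j ∧ j ≤ k ∧ W s ⊆ Set.Ioo (a (j-1)) (a j) := by
    intro s h1 h2
    obtain ⟨u, v, hW⟩ := hWint s h1 h2
    have hγW : γ s ∈ W s := hWmem s h1 h2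
    have hanotin : ∀ j, j ≤ k → a j ∉ W s := fun j hj hmem => hgaB j hj (hWval s h1 h2 _ hmem)
    obtain ⟨hγIcc, hγc⟩ := hγfib s h1 h2
    obtain ⟨j, hj1, hj2, hj3, hj4⟩ := coverLemma a k hk (ha0 ▸ hγIcc.1) (hak ▸ hγIcc.2)
    have hne1 : a (j-1) ≠ γ s := fun h => hanotin (j-1) (by omega) (h ▸ hγW)
    have hne2 : a j ≠ γ s := fun h => hanotin j hj2 (h ▸ hγW)
    have hj3' : a (j-1) < γ s := lt_of_le_of_ne hj3 hne1
    have hj4' : γ s < a j := lt_of_le_of_ne hj4 (Ne.symm hne2)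
    refine ⟨j, hj1, hj2, ?_⟩
    intro x hx
    have hx' : x ∈ Set.Ioo u v := hW ▸ hx
    have hγW' : γ s ∈ Set.Ioo u v := hW ▸ hγW
    constructor
    · by_contra h
      push_neg at h
      exact hanotin (j-1) (by omega)
        (by rw [hW]; exact ⟨lt_of_lt_of_le hx'.1 h, hj3'.trans hγW'.2⟩)
    · by_contra h
      push_neg at h
      exact hanotin j hj2
        (by rw [hW]; exact ⟨hγW'.1.trans hj4', lt_of_le_of_lt h hx'.2⟩)
  have hWinj : ∀ s, 1 ≤ s → s ≤ p → Set.InjOn g (W s) := by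
    intro s h1 h2
    obtain ⟨j, hj1, hj2, hsub⟩ := hWpiece s h1 h2
    rcases hpiece j hj1 hj2 with h | h
    · exact h.injOn.mono hsub
    · exact h.injOn.mono hsub
  have hγlt : ∀ s r, 1 ≤ s → s < r → r ≤ p → γ s < γ r :=
    fun s r h1 h2 h3 => chainLt γ 1 p hγmono h1 h2 h3
  have disj : ∀ s r, 1 ≤ s → s ≤ p → 1 ≤ r → r ≤ p → s ≠ r → Disjoint (W s) (W r) := by
    intro s r hs1 hs2 hr1 hr2 hsr
    by_contra hnd
    rw [Set.not_disjoint_iff] at hnd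
    obtain ⟨x, hxs, hxr⟩ := hnd
    obtain ⟨u, v, hWs⟩ := hWint s hs1 hs2
    obtain ⟨u', v', hWr⟩ := hWint r hr1 hr2
    have hxs' : x ∈ Set.Ioo u v := hWs ▸ hxs
    have hxr' : x ∈ Set.Ioo u' v' := hWr ▸ hxr
    have hunion : W s ∪ W r = Set.Ioo (min u u') (max v v') := by
      rw [hWs, hWr]
      exact Set.Ioo_union_Ioo' (hxr'.1.trans hxs'.2) (hxs'.1.trans hxr'.2)
    have hVsub : W s ∪ W r ⊆ Set.Icc α β := Set.union_subset (hWsub s hs1 hs2) (hWsub r hr1 hr2)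
    have hVimg : g '' (W s ∪ W r) = Set.Ioo (b (i-1)) (b i) := by
      rw [Set.image_union, hWimg s hs1 hs2, hWimg r hr1 hr2, Set.union_self]
    have hVs := hWmax s hs1 hs2 _ hVsub ⟨_, _, hunion⟩ Set.subset_union_left hVimg
    have hVr := hWmax r hr1 hr2 _ hVsub ⟨_, _, hunion⟩ Set.subset_union_right hVimg
    have hWsr : W s = W r := hVs.symm.trans hVr
    have hγrW : γ r ∈ W s := hWsr ▸ hWmem r hr1 hr2
    have heq : γ s = γ r := hWinj s hs1 hs2 (hWmem s hs1 hs2) hγrW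
      (by rw [(hγfib s hs1 hs2).2, (hγfib r hr1 hr2).2])
    rcases Nat.lt_or_ge s r with h | h
    · exact absurd heq (hγlt s r hs1 h hr2).ne
    · exact absurd heq.symm (hγlt r s hr1 (by omega) hs2).ne
  refine ⟨disj, ?_⟩
  ext x
  simp only [Set.mem_setOf_eq, Set.mem_iUnion, exists_prop, Set.mem_Icc]
  constructor
  · rintro ⟨hxIcc, hgx⟩
    have hxA : ∀ j, j ≤ k → x ≠ a j := fun j hj he => hgaB j hj (by rw [← he]; exact hgx)
    obtain ⟨j, hj1, hj2, h1, h2⟩ := coverLemma a k hk (ha0 ▸ hxIcc.1) (hak ▸ hxIcc.2)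
    have h1' : a (j-1) < x := lt_of_le_of_ne h1 (Ne.symm (hxA (j-1) (by omega)))
    have h2' : x < a j := lt_of_le_of_ne h2 (hxA j hj2)
    have hsubIcc := haIcc j hj1 hj2
    have hcontP : ContinuousOn g (Set.Icc (a (j-1)) (a j)) := hcont.mono hsubIcc
    have hPmem : a (j-1) ∈ Set.Icc (a (j-1)) (a j) := Set.left_mem_Icc.2 (hajlt j hj1 hj2).le
    have hQmem : a j ∈ Set.Icc (a (j-1)) (a j) := Set.right_mem_Icc.2 (hajlt j hj1 hj2).le
    have hxmem : x ∈ Set.Icc (a (j-1)) (a j) := ⟨h1, h2⟩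
    have key : ∃ u v, u < x ∧ x < v ∧ Set.Ioo u v ⊆ Set.Icc (a (j-1)) (a j) ∧
        g '' Set.Ioo u v = Set.Ioo (b (i-1)) (b i) := by
      rcases hpieceC j hj1 hj2 with hmono | hanti
      · have hfP : g (a (j-1)) ≤ b (i-1) := by
          obtain ⟨m, hm, hbm⟩ := hBmem (j-1) (by omega)
          rw [← hbm]
          exact hble m hm (by rw [hbm]; exact (hmono hPmem hxmem h1').trans hgx.2)
        have hfQ : b i ≤ g (a j) := by
          obtain ⟨m, hm, hbm⟩ := hBmem j hj2
          rw [← hbm]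
          exact hbge m hm (by rw [hbm]; exact hgx.1.trans (hmono hxmem hQmem h2'))
        exact aux_mono hcontP hmono ⟨h1', h2'⟩ hgx.1 hgx.2 hfP hfQ
      · have hfP : b i ≤ g (a (j-1)) := by
          obtain ⟨m, hm, hbm⟩ := hBmem (j-1) (by omega)
          rw [← hbm]
          exact hbge m hm (by rw [hbm]; exact hgx.1.trans (hanti hPmem hxmem h1'))
        have hfQ : g (a j) ≤ b (i-1) := by
          obtain ⟨m, hm, hbm⟩ := hBmem j hj2
          rw [← hbm]
          exact hble m hm (by rw [hbm]; exact (hanti hxmem hQmem h2').trans hgx.2)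
        exact aux_anti hcontP hanti ⟨h1', h2'⟩ hgx.1 hgx.2 hfP hfQ
    obtain ⟨u, v, hux, hxv, hsub, himg⟩ := key
    have hcim : c ∈ g '' Set.Ioo u v := himg ▸ hcmem
    obtain ⟨t, ht, hgt⟩ := hcim
    have htIcc : t ∈ Set.Icc α β := hsubIcc (hsub ht)
    have htfib : t ∈ {x | ∃ s, 1 ≤ s ∧ s ≤ p ∧ γ s = x} := by
      rw [← hfiber]; exact ⟨htIcc, hgt⟩
    obtain ⟨s, hs1, hs2, hst⟩ := htfib
    obtain ⟨u', v', hWs⟩ := hWint s hs1 hs2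
    have hγW : γ s ∈ Set.Ioo u' v' := hWs ▸ hWmem s hs1 hs2
    have htuv : γ s ∈ Set.Ioo u v := hst ▸ ht
    have hunion : W s ∪ Set.Ioo u v = Set.Ioo (min u' u) (max v' v) := by
      rw [hWs]
      exact Set.Ioo_union_Ioo' (htuv.1.trans hγW.2) (hγW.1.trans htuv.2)
    have hVsub : W s ∪ Set.Ioo u v ⊆ Set.Icc α β :=
      Set.union_subset (hWsub s hs1 hs2) (fun z hz => hsubIcc (hsub hz))
    have hVimg : g '' (W s ∪ Set.Ioo u v) = Set.Ioo (b (i-1)) (b i) := by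
      rw [Set.image_union, hWimg s hs1 hs2, himg, Set.union_self]
    have hVeq := hWmax s hs1 hs2 _ hVsub ⟨_, _, hunion⟩ Set.subset_union_left hVimg
    refine ⟨s, ⟨hs1, hs2⟩, ?_⟩
    rw [← hVeq]
    exact Or.inr ⟨hux, hxv⟩
  · rintro ⟨s, ⟨hs1, hs2⟩, hxW⟩
    exact ⟨hWsub s hs1 hs2 hxW, hWval s hs1 hs2 x hxW⟩
end

section
/- Fix i ∈ {1,…,ℓ}, let c_i = (b_{i−1}+b_i)/2, write g⁻¹({c_i}) = {γ_1 < ⋯ < γ_p}, and for each s let W_s be a maximal open interval containing γ_s with g(W_s) = (b_{i−1}, b_i). Then each W_s is contained in exactly one open interval (α_{j−1}, α_j) of the monotonicity partition, and distinct intervals W_r ≠ W_s are contained in distinct intervals of the partition (no interval (α_{j−1}, α_j) contains two of the W_s). -/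
theorem stmt2
    (α β : ℝ) (hαβ : α < β)
    (k : ℕ) (hk : 0 < k)
    (a : ℕ → ℝ) (ha0 : a 0 = α) (hak : a k = β)
    (hamono : ∀ j < k, a j < a (j + 1))
    (g g' : ℝ → ℝ)
    (hderiv : ∀ x ∈ Set.Icc α β, HasDerivWithinAt g (g' x) (Set.Icc α β) x)
    (hg'cont : ContinuousOn g' (Set.Icc α β))
    (hpiece : ∀ j, 1 ≤ j → j ≤ k →
      StrictMonoOn g (Set.Ioo (a (j - 1)) (a j)) ∨ StrictAntiOn g (Set.Ioo (a (j - 1)) (a j)))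
    (hg'ne : ∀ j, 1 ≤ j → j ≤ k → ∀ x ∈ Set.Ioo (a (j - 1)) (a j), g' x ≠ 0)
    (hcrit : ∀ j, 0 < j → j < k → g' (a j) = 0 ∧
      ((∀ᶠ x in nhdsWithin (a j) (Set.Icc α β \ {a j}), g x < g (a j)) ∨
       (∀ᶠ x in nhdsWithin (a j) (Set.Icc α β \ {a j}), g (a j) < g x)))
    (ℓ : ℕ) (b : ℕ → ℝ)
    (hbmono : ∀ i < ℓ, b i < b (i + 1))
    (hB : g '' {x | ∃ j ≤ k, a j = x} = {y | ∃ i ≤ ℓ, b i = y})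
    (i : ℕ) (hi1 : 1 ≤ i) (hiℓ : i ≤ ℓ)
    (p : ℕ) (hp : 0 < p) (γ : ℕ → ℝ)
    (hγmono : ∀ s, 1 ≤ s → s < p → γ s < γ (s + 1))
    (hfiber : {x ∈ Set.Icc α β | g x = (b (i - 1) + b i) / 2} =
      {x | ∃ s, 1 ≤ s ∧ s ≤ p ∧ γ s = x})
    (W : ℕ → Set ℝ)
    (hWsub : ∀ s, 1 ≤ s → s ≤ p → W s ⊆ Set.Icc α β)
    (hWmem : ∀ s, 1 ≤ s → s ≤ p → γ s ∈ W s)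
    (hWint : ∀ s, 1 ≤ s → s ≤ p → ∃ u v : ℝ, W s = Set.Ioo u v)
    (hWimg : ∀ s, 1 ≤ s → s ≤ p → g '' W s = Set.Ioo (b (i - 1)) (b i))
    (hWmax : ∀ s, 1 ≤ s → s ≤ p → ∀ V : Set ℝ, V ⊆ Set.Icc α β →
      (∃ u v : ℝ, V = Set.Ioo u v) → W s ⊆ V →
      g '' V = Set.Ioo (b (i - 1)) (b i) → V = W s)
 :
    (∀ s, 1 ≤ s → s ≤ p →
      ∃! j : ℕ, (1 ≤ j ∧ j ≤ k) ∧ W s ⊆ Set.Ioo (a (j - 1)) (a j)) ∧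
    (∀ j, 1 ≤ j → j ≤ k → ∀ s r, 1 ≤ s → s ≤ p → 1 ≤ r → r ≤ p →
      W s ⊆ Set.Ioo (a (j - 1)) (a j) → W r ⊆ Set.Ioo (a (j - 1)) (a j) → s = r) := by

  classical
  -- basic monotonicity of a and b
  have alt : ∀ m n : ℕ, m < n → n ≤ k → a m < a n := by
    intro m n hmn hnk
    induction n with
    | zero => omega
    | succ n ih =>
      rcases Nat.lt_succ_iff_lt_or_eq.mp hmn with h | h
      · exact (ih h (by omega)).trans (hamono n (by omega))
      · exact h ▸ hamono n (by omega)
  have ale : ∀ m n : ℕ, m ≤ n → n ≤ k → a m ≤ a n := by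
    intro m n hmn hnk
    rcases eq_or_lt_of_le hmn with h | h
    · exact le_of_eq (by rw [h])
    · exact (alt m n h hnk).le
  have blt : ∀ m n : ℕ, m < n → n ≤ ℓ → b m < b n := by
    intro m n hmn hnk
    induction n with
    | zero => omega
    | succ n ih =>
      rcases Nat.lt_succ_iff_lt_or_eq.mp hmn with h | h
      · exact (ih h (by omega)).trans (hbmono n (by omega))
      · exact h ▸ hbmono n (by omega)
  have γlt : ∀ s r : ℕ, 1 ≤ s → s < r → r ≤ p → γ s < γ r := by
    intro s r hs hsr hrp
    induction r with
    | zero => omega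
    | succ r ih =>
      rcases Nat.lt_succ_iff_lt_or_eq.mp hsr with h | h
      · exact (ih h (by omega)).trans (hγmono r (by omega) (by omega))
      · exact h ▸ hγmono s hs (by omega)
  -- no b m strictly between b (i-1) and b i
  have bnb : ∀ m : ℕ, m ≤ ℓ → ¬ (b (i - 1) < b m ∧ b m < b i) := by
    intro m hm ⟨h1, h2⟩
    rcases lt_or_ge m i with h | h
    · rcases eq_or_lt_of_le (Nat.le_pred_of_lt h) with he | hl
      · exact absurd h1 (by rw [he]; exact lt_irrefl _)
      · exact absurd (blt m (i - 1) hl (by omega)) (by linarith)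
    · rcases eq_or_lt_of_le h with he | hl
      · exact absurd h2 (by rw [← he]; exact lt_irrefl _)
      · exact absurd (blt i m hl hm) (by linarith)
  -- W s contains no partition point
  have WnoA : ∀ s, 1 ≤ s → s ≤ p → ∀ j ≤ k, a j ∉ W s := by
    intro s hs1 hsp j hj hmem
    have h1 : g (a j) ∈ Set.Ioo (b (i - 1)) (b i) := by
      rw [← hWimg s hs1 hsp]; exact ⟨a j, hmem, rfl⟩
    have h2 : g (a j) ∈ {y | ∃ i ≤ ℓ, b i = y} := by
      rw [← hB]; exact ⟨a j, ⟨j, hj, rfl⟩, rfl⟩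
    obtain ⟨m, hm, hbm⟩ := h2
    exact bnb m hm ⟨hbm ▸ h1.1, hbm ▸ h1.2⟩
  -- g (γ s) = c
  have hγc : ∀ s, 1 ≤ s → s ≤ p → g (γ s) = (b (i - 1) + b i) / 2 := by
    intro s hs1 hsp
    have : γ s ∈ {x | ∃ s, 1 ≤ s ∧ s ≤ p ∧ γ s = x} := ⟨s, hs1, hsp, rfl⟩
    rw [← hfiber] at this
    exact this.2
  constructor
  · -- part 1
    intro s hs1 hsp
    have hγW := hWmem s hs1 hsp
    have hγIcc := hWsub s hs1 hsp hγW
    have hγne : ∀ j ≤ k, γ s ≠ a j := by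
      intro j hj h
      exact WnoA s hs1 hsp j hj (h ▸ hγW)
    have hex : ∃ j, γ s < a j := ⟨k, lt_of_le_of_ne (hak ▸ hγIcc.2) (hγne k le_rfl)⟩
    set j := Nat.find hex with hjdef
    have hjspec : γ s < a j := Nat.find_spec hex
    have hjk : j ≤ k := Nat.find_le (lt_of_le_of_ne (hak ▸ hγIcc.2) (hγne k le_rfl))
    have hj1 : 1 ≤ j := by
      rcases Nat.eq_zero_or_pos j with h | h
      · exact absurd (h ▸ hjspec) (not_lt.mpr (ha0 ▸ hγIcc.1))
      · exact h
    have hlow : a (j - 1) < γ s := by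
      have h1 : ¬ γ s < a (j - 1) := Nat.find_min hex (by omega)
      exact lt_of_le_of_ne (not_lt.mp h1) (fun h => hγne (j-1) (by omega) h.symm)
    obtain ⟨u, v, huv⟩ := hWint s hs1 hsp
    have hγuv : γ s ∈ Set.Ioo u v := huv ▸ hγW
    have hsub : W s ⊆ Set.Ioo (a (j - 1)) (a j) := by
      intro y hy
      have hyuv : y ∈ Set.Ioo u v := huv ▸ hy
      constructor
      · by_contra h
        push_neg at h
        have : a (j - 1) ∈ W s := by
          rw [huv]
          exact ⟨lt_of_lt_of_le hyuv.1 h, lt_trans hlow hγuv.2⟩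
        exact WnoA s hs1 hsp (j-1) (by omega) this
      · by_contra h
        push_neg at h
        have : a j ∈ W s := by
          rw [huv]
          exact ⟨lt_trans hγuv.1 hjspec, lt_of_le_of_lt h hyuv.2⟩
        exact WnoA s hs1 hsp j hjk this
    refine ⟨j, ⟨⟨hj1, hjk⟩, hsub⟩, ?_⟩
    rintro j' ⟨⟨hj'1, hj'k⟩, hsub'⟩
    have hγ' : γ s ∈ Set.Ioo (a (j' - 1)) (a j') := hsub' hγW
    rcases lt_trichotomy j' j with h | h | h
    · have : a j' ≤ a (j - 1) := ale j' (j-1) (by omega) (by omega)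
      exact absurd (lt_trans hγ'.2 (lt_of_le_of_lt this hlow)) (lt_irrefl _)
    · exact h
    · have : a j ≤ a (j' - 1) := ale j (j'-1) (by omega) (by omega)
      exact absurd (lt_trans hjspec (lt_of_le_of_lt this hγ'.1)) (lt_irrefl _)
  · -- part 2
    intro j hj1 hjk s r hs1 hsp hr1 hrp hsubs hsubr
    have hγs : γ s ∈ Set.Ioo (a (j - 1)) (a j) := hsubs (hWmem s hs1 hsp)
    have hγr : γ r ∈ Set.Ioo (a (j - 1)) (a j) := hsubr (hWmem r hr1 hrp)
    have heq : γ s = γ r := by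
      have hgs := hγc s hs1 hsp
      have hgr := hγc r hr1 hrp
      rcases hpiece j hj1 hjk with hm | hm
      · exact hm.injOn hγs hγr (by rw [hgs, hgr])
      · exact hm.injOn hγs hγr (by rw [hgs, hgr])
    rcases lt_trichotomy s r with h | h | h
    · exact absurd (heq ▸ γlt s r hs1 h hrp) (lt_irrefl _)
    · exact h
    · exact absurd (heq ▸ γlt r s hr1 h hsp) (lt_irrefl _)
end

section
/- For every i ∈ {1,…,ℓ}, the number of preimages #g⁻¹({y}) (the cardinality of {x ∈ [α,β] : g(x) = y}) is finite and constant as y ranges over the open interval (b_{i−1}, b_i). -/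
open Set

/-- If `g` is continuous on `[p,q]`, strictly monotone on `(p,q)`, and `y` differs from
the endpoint values, then a preimage of `y` in `(p,q)` forces `g p < y < g q`. -/
private lemma key_mono (g : ℝ → ℝ) (p q : ℝ)
    (hc : ContinuousOn g (Set.Icc p q)) (hm : StrictMonoOn g (Set.Ioo p q))
    (y : ℝ) (hyp : g p ≠ y) (hyq : g q ≠ y)
    (x : ℝ) (hx : x ∈ Set.Ioo p q) (hgx : g x = y) :
    g p < y ∧ y < g q := by
  subst hgx
  constructor
  · by_contra hle
    push_neg at hle
    have hlt : g x < g p := lt_of_le_of_ne hle hyp.symm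
    set t := (p + x) / 2 with ht
    have htp : p < t := by have := hx.1; simp only [ht]; linarith
    have htx : t < x := by have := hx.1; simp only [ht]; linarith
    have htq : t ∈ Set.Ioo p q := ⟨htp, htx.trans hx.2⟩
    have hgtx : g t < g x := hm htq hx htx
    have hsub : Set.Icc (g t) (g p) ⊆ g '' Set.Icc p t :=
      intermediate_value_Icc' htp.le
        (hc.mono (Set.Icc_subset_Icc le_rfl (htx.le.trans hx.2.le)))
    obtain ⟨s, hs, hgs⟩ := hsub ⟨hgtx.le, hlt.le⟩
    have hsp : s ≠ p := fun h => hyp (by rw [← h, hgs])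
    have hs' : s ∈ Set.Ioo p q :=
      ⟨lt_of_le_of_ne hs.1 (Ne.symm hsp), lt_of_le_of_lt hs.2 (htx.trans hx.2)⟩
    have : g s < g x := hm hs' hx (lt_of_le_of_lt hs.2 htx)
    rw [hgs] at this
    exact lt_irrefl _ this
  · by_contra hle
    push_neg at hle
    have hlt : g q < g x := lt_of_le_of_ne hle hyq
    set t := (x + q) / 2 with ht
    have htx : x < t := by have := hx.2; simp only [ht]; linarith
    have htq : t < q := by have := hx.2; simp only [ht]; linarith
    have ht' : t ∈ Set.Ioo p q := ⟨hx.1.trans htx, htq⟩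
    have hgtx : g x < g t := hm hx ht' htx
    have hsub : Set.Icc (g q) (g t) ⊆ g '' Set.Icc t q :=
      intermediate_value_Icc' htq.le
        (hc.mono (Set.Icc_subset_Icc (hx.1.trans htx).le le_rfl))
    obtain ⟨s, hs, hgs⟩ := hsub ⟨hlt.le, hgtx.le⟩
    have hsq : s ≠ q := fun h => hyq (by rw [← h, hgs])
    have hs' : s ∈ Set.Ioo p q :=
      ⟨(hx.1.trans htx).trans_le hs.1, lt_of_le_of_ne hs.2 hsq⟩
    have : g x < g s := hm hx hs' (htx.trans_le hs.1)
    rw [hgs] at this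
    exact lt_irrefl _ this

/-- On a piece where `g` is strictly monotone (either direction), the interval `(p,q)`
contains a preimage of `y` iff `y` lies strictly between the endpoint values. -/
private lemma key_piece (g : ℝ → ℝ) (p q : ℝ) (hpq : p < q)
    (hc : ContinuousOn g (Set.Icc p q))
    (hm : StrictMonoOn g (Set.Ioo p q) ∨ StrictAntiOn g (Set.Ioo p q))
    (y : ℝ) (hyp' : g p ≠ y) (hyq' : g q ≠ y) :
    (∃ x ∈ Set.Ioo p q, g x = y) ↔ ((g p < y ∧ y < g q) ∨ (g q < y ∧ y < g p)) := by
  constructor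
  · rintro ⟨x, hx, hgx⟩
    rcases hm with hm | hm
    · exact Or.inl (key_mono g p q hc hm y hyp' hyq' x hx hgx)
    · have hm' : StrictMonoOn (fun z => -g z) (Set.Ioo p q) :=
        fun u hu v hv huv => neg_lt_neg (hm hu hv huv)
      have := key_mono (fun z => -g z) p q hc.neg hm' (-y)
        (by simpa using hyp') (by simpa using hyq') x hx (by simp [hgx])
      have t1 : -g p < -y := this.1
      have t2 : -y < -g q := this.2
      exact Or.inr ⟨by linarith, by linarith⟩
  · rintro (⟨h1, h2⟩ | ⟨h1, h2⟩)
    · obtain ⟨x, hx, hgx⟩ := intermediate_value_Icc hpq.le hc ⟨h1.le, h2.le⟩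
      have hxp : x ≠ p := fun h => hyp' (h ▸ hgx)
      have hxq : x ≠ q := fun h => hyq' (h ▸ hgx)
      exact ⟨x, ⟨lt_of_le_of_ne hx.1 (Ne.symm hxp), lt_of_le_of_ne hx.2 hxq⟩, hgx⟩
    · obtain ⟨x, hx, hgx⟩ := intermediate_value_Icc' hpq.le hc ⟨h1.le, h2.le⟩
      have hxp : x ≠ p := fun h => hyp' (h ▸ hgx)
      have hxq : x ≠ q := fun h => hyq' (h ▸ hgx)
      exact ⟨x, ⟨lt_of_le_of_ne hx.1 (Ne.symm hxp), lt_of_le_of_ne hx.2 hxq⟩, hgx⟩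

theorem stmt3
    (α β : ℝ) (hαβ : α < β)
    (k : ℕ) (hk : 0 < k)
    (a : ℕ → ℝ) (ha0 : a 0 = α) (hak : a k = β)
    (hamono : ∀ j < k, a j < a (j + 1))
    (g g' : ℝ → ℝ)
    (hderiv : ∀ x ∈ Set.Icc α β, HasDerivWithinAt g (g' x) (Set.Icc α β) x)
    (hg'cont : ContinuousOn g' (Set.Icc α β))
    (hpiece : ∀ j, 1 ≤ j → j ≤ k →
      StrictMonoOn g (Set.Ioo (a (j - 1)) (a j)) ∨ StrictAntiOn g (Set.Ioo (a (j - 1)) (a j)))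
    (hg'ne : ∀ j, 1 ≤ j → j ≤ k → ∀ x ∈ Set.Ioo (a (j - 1)) (a j), g' x ≠ 0)
    (hcrit : ∀ j, 0 < j → j < k → g' (a j) = 0 ∧
      ((∀ᶠ x in nhdsWithin (a j) (Set.Icc α β \ {a j}), g x < g (a j)) ∨
       (∀ᶠ x in nhdsWithin (a j) (Set.Icc α β \ {a j}), g (a j) < g x)))
    (ℓ : ℕ) (b : ℕ → ℝ)
    (hbmono : ∀ i < ℓ, b i < b (i + 1))
    (hB : g '' {x | ∃ j ≤ k, a j = x} = {y | ∃ i ≤ ℓ, b i = y})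
    (i : ℕ) (hi1 : 1 ≤ i) (hiℓ : i ≤ ℓ) :
    ∃ n : ℕ, ∀ y ∈ Set.Ioo (b (i - 1)) (b i),
      {x ∈ Set.Icc α β | g x = y}.Finite ∧ {x ∈ Set.Icc α β | g x = y}.ncard = n := by
  classical
  have hgcont : ContinuousOn g (Set.Icc α β) := fun x hx => (hderiv x hx).continuousWithinAt
  -- a is strictly increasing up to k
  have astep : ∀ n, n ≤ k → ∀ m, m < n → a m < a n := by
    intro n
    induction n with
    | zero => intro _ m hm; exact absurd hm (Nat.not_lt_zero m)
    | succ p ih =>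
      intro hn m hm
      have hp : a p < a (p + 1) := hamono p (by omega)
      rcases Nat.lt_or_ge m p with h | h
      · exact (ih (by omega) m h).trans hp
      · have hmp : m = p := by omega
        rw [hmp]; exact hp
  have haIcc : ∀ j, j ≤ k → a j ∈ Set.Icc α β := by
    intro j hj
    constructor
    · rw [← ha0]
      rcases Nat.eq_zero_or_pos j with h | h
      · rw [h]
      · exact (astep j hj 0 h).le
    · rw [← hak]
      rcases eq_or_lt_of_le hj with h | h
      · rw [h]
      · exact (astep k le_rfl j h).le
  -- b is strictly increasing up to ℓ
  have bstep : ∀ n, n ≤ ℓ → ∀ m, m < n → b m < b n := by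
    intro n
    induction n with
    | zero => intro _ m hm; exact absurd hm (Nat.not_lt_zero m)
    | succ p ih =>
      intro hn m hm
      have hp : b p < b (p + 1) := hbmono p (by omega)
      rcases Nat.lt_or_ge m p with h | h
      · exact (ih (by omega) m h).trans hp
      · have hmp : m = p := by omega
        rw [hmp]; exact hp
  set c := b (i - 1) with hc
  set d := b i with hd
  have hcd : c < d := by
    have h1 : b (i - 1) < b (i - 1 + 1) := hbmono (i - 1) (by omega)
    have h2 : i - 1 + 1 = i := by omega
    rw [h2] at h1; exact h1
  -- every value of g at a partition point is outside (c, d)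
  have hval : ∀ j, j ≤ k → g (a j) ≤ c ∨ d ≤ g (a j) := by
    intro j hj
    have hmem : g (a j) ∈ {y | ∃ m ≤ ℓ, b m = y} := by
      rw [← hB]; exact ⟨a j, ⟨j, hj, rfl⟩, rfl⟩
    obtain ⟨m, hm, hbm⟩ := hmem
    rcases le_or_gt m (i - 1) with h | h
    · left; rw [← hbm, hc]
      rcases eq_or_lt_of_le h with h' | h'
      · rw [h']
      · exact (bstep (i - 1) (by omega) m h').le
    · right; rw [← hbm, hd]
      have him : i ≤ m := by omega
      rcases eq_or_lt_of_le him with h' | h'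
      · rw [h']
      · exact (bstep m hm i h').le
  have hyne : ∀ y ∈ Set.Ioo c d, ∀ j, j ≤ k → g (a j) ≠ y := by
    intro y hy j hj
    rcases hval j hj with h | h
    · exact ne_of_lt (h.trans_lt hy.1)
    · exact ne_of_gt (hy.2.trans_le h)
  -- the piece condition, independent of y
  set C : ℕ → Prop := fun j =>
    (g (a j) ≤ c ∧ d ≤ g (a (j + 1))) ∨ (g (a (j + 1)) ≤ c ∧ d ≤ g (a j)) with hC
  have hmonoj : ∀ j, j < k →
      StrictMonoOn g (Set.Ioo (a j) (a (j + 1))) ∨ StrictAntiOn g (Set.Ioo (a j) (a (j + 1))) := by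
    intro j hj
    have := hpiece (j + 1) (by omega) (by omega)
    simpa using this
  have hpieceIff : ∀ j, j < k → ∀ y ∈ Set.Ioo c d,
      ((∃ x ∈ Set.Ioo (a j) (a (j + 1)), g x = y) ↔ C j) := by
    intro j hj y hy
    have hpq : a j < a (j + 1) := hamono j hj
    have hsub : Set.Icc (a j) (a (j + 1)) ⊆ Set.Icc α β :=
      Set.Icc_subset_Icc (haIcc j (by omega)).1 (haIcc (j + 1) (by omega)).2
    have h1 := hval j (by omega)
    have h2 := hval (j + 1) (by omega)
    rw [key_piece g (a j) (a (j + 1)) hpq (hgcont.mono hsub) (hmonoj j hj) y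
      (hyne y hy j (by omega)) (hyne y hy (j + 1) (by omega))]
    constructor
    · rintro (⟨u1, u2⟩ | ⟨u1, u2⟩)
      · left
        constructor
        · rcases h1 with h | h
          · exact h
          · exact absurd (hy.2.trans_le h) (not_lt.mpr u1.le)
        · rcases h2 with h | h
          · exact absurd (h.trans_lt hy.1) (not_lt.mpr u2.le)
          · exact h
      · right
        constructor
        · rcases h2 with h | h
          · exact h
          · exact absurd (hy.2.trans_le h) (not_lt.mpr u1.le)
        · rcases h1 with h | h
          · exact absurd (h.trans_lt hy.1) (not_lt.mpr u2.le)
          · exact h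
    · rintro (⟨u1, u2⟩ | ⟨u1, u2⟩)
      · exact Or.inl ⟨u1.trans_lt hy.1, hy.2.trans_le u2⟩
      · exact Or.inr ⟨u1.trans_lt hy.1, hy.2.trans_le u2⟩
  -- uniqueness of the piece containing a point
  have huniq : ∀ x : ℝ, ∀ j, j < k → ∀ j', j' < k →
      x ∈ Set.Ioo (a j) (a (j + 1)) → x ∈ Set.Ioo (a j') (a (j' + 1)) → j = j' := by
    intro x j hj j' hj' hx hx'
    rcases lt_trichotomy j j' with h | h | h
    · exfalso
      have h1 : a (j + 1) ≤ a j' := by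
        rcases eq_or_lt_of_le (Nat.succ_le_of_lt h) with h' | h'
        · have h'' : j + 1 = j' := h'
          rw [h'']
        · exact (astep j' (by omega) (j + 1) h').le
      linarith [hx.2, hx'.1]
    · exact h
    · exfalso
      have h1 : a (j' + 1) ≤ a j := by
        rcases eq_or_lt_of_le (Nat.succ_le_of_lt h) with h' | h'
        · have h'' : j' + 1 = j := h'
          rw [h'']
        · exact (astep j (by omega) (j' + 1) h').le
      linarith [hx.1, hx'.2]
  -- coverage: any preimage point lies in the open interior of some piece
  have hcover : ∀ y ∈ Set.Ioo c d, ∀ x ∈ Set.Icc α β, g x = y →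
      ∃ j, j < k ∧ x ∈ Set.Ioo (a j) (a (j + 1)) := by
    intro y hy x hx hgx
    have hne : ∀ j, j ≤ k → a j ≠ x := by
      intro j hj h
      exact hyne y hy j hj (by rw [h, hgx])
    have h0 : a 0 < x := lt_of_le_of_ne (ha0 ▸ hx.1) (hne 0 (by omega))
    set m := Nat.findGreatest (fun j => a j < x) k with hm
    have hmem : a m < x := Nat.findGreatest_spec (P := fun j => a j < x) (Nat.zero_le k) h0
    have hmk : m ≤ k := Nat.findGreatest_le k
    have hxk : x < a k := by
      rw [hak]
      exact lt_of_le_of_ne hx.2 (fun h => hne k le_rfl (by rw [hak, h]))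
    have hmk' : m < k := by
      rcases eq_or_lt_of_le hmk with h | h
      · exfalso; rw [h] at hmem; linarith
      · exact h
    have hnot : ¬ a (m + 1) < x :=
      Nat.findGreatest_is_greatest (Nat.lt_succ_self m) (by omega)
    refine ⟨m, hmk', hmem, ?_⟩
    exact lt_of_le_of_ne (not_lt.mp hnot) (fun h => hne (m + 1) (by omega) h.symm)
  -- the index function
  set idx : ℝ → ℕ := fun x =>
    if h : ∃ j, j < k ∧ x ∈ Set.Ioo (a j) (a (j + 1)) then h.choose else 0 with hidx
  have hidx_spec : ∀ x : ℝ, ∀ j, j < k → x ∈ Set.Ioo (a j) (a (j + 1)) → idx x = j := by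
    intro x j hj hx
    have h : ∃ j, j < k ∧ x ∈ Set.Ioo (a j) (a (j + 1)) := ⟨j, hj, hx⟩
    simp only [hidx, dif_pos h]
    exact huniq x h.choose h.choose_spec.1 j hj h.choose_spec.2 hx
  refine ⟨((Finset.range k).filter C).card, ?_⟩
  intro y hy
  set S := {x ∈ Set.Icc α β | g x = y} with hS
  have hbij : Set.BijOn idx S ↑((Finset.range k).filter C) := by
    refine ⟨?_, ?_, ?_⟩
    · intro x hx
      obtain ⟨j, hjk, hxj⟩ := hcover y hy x hx.1 hx.2
      rw [hidx_spec x j hjk hxj]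
      simp only [Finset.coe_filter, Set.mem_setOf_eq, Finset.mem_range]
      exact ⟨hjk, (hpieceIff j hjk y hy).1 ⟨x, hxj, hx.2⟩⟩
    · intro x hx x' hx' he
      obtain ⟨j, hjk, hxj⟩ := hcover y hy x hx.1 hx.2
      obtain ⟨j', hjk', hxj'⟩ := hcover y hy x' hx'.1 hx'.2
      have hj : j = j' := by
        rw [← hidx_spec x j hjk hxj, ← hidx_spec x' j' hjk' hxj', he]
      subst hj
      rcases hmonoj j hjk with hmono | hanti
      · exact hmono.injOn hxj hxj' (hx.2.trans hx'.2.symm)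
      · exact hanti.injOn hxj hxj' (hx.2.trans hx'.2.symm)
    · intro j hj
      simp only [Finset.coe_filter, Set.mem_setOf_eq, Finset.mem_range] at hj
      obtain ⟨x, hxj, hgx⟩ := (hpieceIff j hj.1 y hy).2 hj.2
      have hxab : x ∈ Set.Icc α β :=
        ⟨((haIcc j (by omega)).1.trans_lt hxj.1).le,
          (hxj.2.trans_le (haIcc (j + 1) (by omega)).2).le⟩
      exact ⟨x, ⟨hxab, hgx⟩, hidx_spec x j hj.1 hxj⟩
  have hfin : S.Finite :=
    Set.Finite.of_finite_image (hbij.image_eq ▸ ((Finset.range k).filter C).finite_toSet)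
      hbij.injOn
  refine ⟨hfin, ?_⟩
  calc S.ncard = (idx '' S).ncard := (Set.ncard_image_of_injOn hbij.injOn).symm
    _ = (↑((Finset.range k).filter C) : Set ℕ).ncard := by rw [hbij.image_eq]
    _ = ((Finset.range k).filter C).card := Set.ncard_coe_finset _
end

section
/- For every i ∈ {1,…,ℓ}, the index set I(y) is constant as y ranges over the open interval (b_{i−1}, b_i); in particular I(y) = I(c_i) for all y ∈ (b_{i−1}, b_i), where c_i = (b_{i−1}+b_i)/2 is the middle point. -/
/-- The index set `I(y)` of monotonicity pieces `A_j` whose image contains `y`,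
where `A_j = [α_{j-1}, α_j)` for `j < k` and `A_k = [α_{k-1}, α_k]`. -/
def IdxSet (g : ℝ → ℝ) (a : ℕ → ℝ) (k : ℕ) (y : ℝ) : Set ℕ :=
  {j | 1 ≤ j ∧ j ≤ k ∧
    ∃ x ∈ (if j = k then Set.Icc (a (k - 1)) (a k) else Set.Ico (a (j - 1)) (a j)), g x = y}

lemma seq_mono_le {a : ℕ → ℝ} {k : ℕ} (h : ∀ j < k, a j < a (j + 1)) :
    ∀ m n, m ≤ n → n ≤ k → a m ≤ a n := by
  intro m n hmn hnk
  induction n with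
  | zero => simp_all
  | succ n ih =>
    rcases Nat.eq_or_lt_of_le hmn with h1 | h1
    · simp [h1]
    · exact le_trans (ih (by omega) (by omega)) (h n (by omega)).le

theorem stmt4
    (α β : ℝ) (hαβ : α < β)
    (k : ℕ) (hk : 0 < k)
    (a : ℕ → ℝ) (ha0 : a 0 = α) (hak : a k = β)
    (hamono : ∀ j < k, a j < a (j + 1))
    (g g' : ℝ → ℝ)
    (hderiv : ∀ x ∈ Set.Icc α β, HasDerivWithinAt g (g' x) (Set.Icc α β) x)
    (hg'cont : ContinuousOn g' (Set.Icc α β))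
    (hpiece : ∀ j, 1 ≤ j → j ≤ k →
      StrictMonoOn g (Set.Ioo (a (j - 1)) (a j)) ∨ StrictAntiOn g (Set.Ioo (a (j - 1)) (a j)))
    (hg'ne : ∀ j, 1 ≤ j → j ≤ k → ∀ x ∈ Set.Ioo (a (j - 1)) (a j), g' x ≠ 0)
    (hcrit : ∀ j, 0 < j → j < k → g' (a j) = 0 ∧
      ((∀ᶠ x in nhdsWithin (a j) (Set.Icc α β \ {a j}), g x < g (a j)) ∨
       (∀ᶠ x in nhdsWithin (a j) (Set.Icc α β \ {a j}), g (a j) < g x)))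
    (ℓ : ℕ) (b : ℕ → ℝ)
    (hbmono : ∀ i < ℓ, b i < b (i + 1))
    (hB : g '' {x | ∃ j ≤ k, a j = x} = {y | ∃ i ≤ ℓ, b i = y})
    (i : ℕ) (hi1 : 1 ≤ i) (hiℓ : i ≤ ℓ) :
    ∀ y ∈ Set.Ioo (b (i - 1)) (b i),
      IdxSet g a k y = IdxSet g a k ((b (i - 1) + b i) / 2) := by
  have hamon : ∀ m n, m ≤ n → n ≤ k → a m ≤ a n := seq_mono_le hamono
  have hbmon : ∀ m n, m ≤ n → n ≤ ℓ → b m ≤ b n := seq_mono_le hbmono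
  have hgc : ContinuousOn g (Set.Icc α β) :=
    fun x hx => (hderiv x hx).continuousWithinAt
  -- values of g at partition points avoid the open interval (b (i-1), b i)
  have hnotin : ∀ m, m ≤ k → g (a m) ∉ Set.Ioo (b (i - 1)) (b i) := by
    intro m hm hmem
    have h1 : g (a m) ∈ g '' {x | ∃ j ≤ k, a j = x} := ⟨a m, ⟨m, hm, rfl⟩, rfl⟩
    rw [hB] at h1
    obtain ⟨s, hs, hbs⟩ := h1
    rw [← hbs] at hmem
    rcases le_or_gt s (i - 1) with h | h
    · exact absurd (hbmon s (i - 1) h (by omega)) (not_le.2 hmem.1)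
    · exact absurd (hbmon i s (by omega) hs) (not_le.2 hmem.2)
  intro y hy
  have hbii : b (i - 1) < b i := by
    have := hbmono (i - 1) (by omega)
    rwa [Nat.sub_add_cancel hi1] at this
  have hc : (b (i - 1) + b i) / 2 ∈ Set.Ioo (b (i - 1)) (b i) :=
    ⟨by linarith, by linarith⟩
  suffices H : ∀ y₁ ∈ Set.Ioo (b (i - 1)) (b i), ∀ y₂ ∈ Set.Ioo (b (i - 1)) (b i),
      IdxSet g a k y₁ ⊆ IdxSet g a k y₂ by
    exact Set.Subset.antisymm (H y hy _ hc) (H _ hc y hy)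
  intro y₁ hy₁ y₂ hy₂ j hj
  obtain ⟨hj1, hjk, x, hx, hgx⟩ := hj
  refine ⟨hj1, hjk, ?_⟩
  have hjj : j - 1 + 1 = j := by omega
  have haj : a (j - 1) < a j := by
    have := hamono (j - 1) (by omega); rwa [hjj] at this
  have hsubL : α ≤ a (j - 1) := ha0 ▸ hamon 0 (j - 1) (Nat.zero_le _) (by omega)
  have hsubR : a j ≤ β := hak ▸ hamon j k hjk le_rfl
  have hsub : Set.Icc (a (j - 1)) (a j) ⊆ Set.Icc α β := Set.Icc_subset_Icc hsubL hsubR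
  have hgcj : ContinuousOn g (Set.Icc (a (j - 1)) (a j)) := hgc.mono hsub
  have hIoo : Set.Ioo (a (j - 1)) (a j) ⊆ Set.Icc α β :=
    (Set.Ioo_subset_Icc_self).trans hsub
  have hd : ∀ z ∈ Set.Ioo (a (j - 1)) (a j), HasDerivAt g (g' z) z := by
    intro z hz
    have hz1 : α < z := lt_of_le_of_lt hsubL hz.1
    have hz2 : z < β := lt_of_lt_of_le hz.2 hsubR
    exact (hderiv z ⟨hz1.le, hz2.le⟩).hasDerivAt (Icc_mem_nhds hz1 hz2)
  -- constant sign of g' on the piece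
  have hsign : (∀ z ∈ Set.Ioo (a (j - 1)) (a j), 0 < g' z) ∨
      (∀ z ∈ Set.Ioo (a (j - 1)) (a j), g' z < 0) := by
    set m := (a (j - 1) + a j) / 2 with hm_def
    have hm : m ∈ Set.Ioo (a (j - 1)) (a j) := ⟨by simp [hm_def]; linarith, by simp [hm_def]; linarith⟩
    have key : ∀ z ∈ Set.Ioo (a (j - 1)) (a j), ∀ w ∈ Set.Ioo (a (j - 1)) (a j),
        g' z < 0 → 0 < g' w → False := by
      intro z hz w hw h1 h2
      have hsub2 : Set.uIcc z w ⊆ Set.Ioo (a (j - 1)) (a j) :=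
        Set.ordConnected_Ioo.uIcc_subset hz hw
      have hcont : ContinuousOn g' (Set.uIcc z w) := hg'cont.mono (hsub2.trans hIoo)
      have h0 : (0 : ℝ) ∈ Set.uIcc (g' z) (g' w) := Set.mem_uIcc.2 (Or.inl ⟨h1.le, h2.le⟩)
      obtain ⟨v, hv, hv0⟩ := intermediate_value_uIcc hcont h0
      exact hg'ne j hj1 hjk v (hsub2 hv) hv0
    rcases lt_or_gt_of_ne (hg'ne j hj1 hjk m hm) with hneg | hpos
    · right; intro z hz
      by_contra h
      push_neg at h
      exact key m hm z hz hneg (lt_of_le_of_ne h (Ne.symm (hg'ne j hj1 hjk z hz)))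
    · left; intro z hz
      by_contra h
      push_neg at h
      exact key z hz m hm (lt_of_le_of_ne h (hg'ne j hj1 hjk z hz)) hpos
  set p := g (a (j - 1)) with hp_def
  set q := g (a j) with hq_def
  have hp' : p ≤ b (i - 1) ∨ b i ≤ p := by
    by_contra h; push_neg at h; exact hnotin (j - 1) (by omega) ⟨h.1, h.2⟩
  have hq' : q ≤ b (i - 1) ∨ b i ≤ q := by
    by_contra h; push_neg at h; exact hnotin j hjk ⟨h.1, h.2⟩
  rcases hsign with hpos | hneg
  · -- g strictly increasing on the closed piece
    have hmono : StrictMonoOn g (Set.Icc (a (j - 1)) (a j)) := by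
      apply strictMonoOn_of_deriv_pos (convex_Icc _ _) hgcj
      intro z hz
      rw [interior_Icc] at hz
      rw [(hd z hz).deriv]
      exact hpos z hz
    by_cases hcase : j = k
    · rw [if_pos hcase] at hx ⊢
      subst hcase
      have h1 : p ≤ y₁ := hgx ▸ hmono.monotoneOn (Set.left_mem_Icc.2 haj.le) hx hx.1
      have h2 : y₁ ≤ q := hgx ▸ hmono.monotoneOn hx (Set.right_mem_Icc.2 haj.le) hx.2
      have hpL : p ≤ b (i - 1) := by rcases hp' with h | h; exact h; linarith [hy₁.2]
      have hqR : b i ≤ q := by rcases hq' with h | h; linarith [hy₁.1]; exact h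
      exact intermediate_value_Icc haj.le hgcj ⟨by linarith [hy₂.1], by linarith [hy₂.2]⟩
    · rw [if_neg hcase] at hx ⊢
      have h1 : p ≤ y₁ := hgx ▸ hmono.monotoneOn (Set.left_mem_Icc.2 haj.le)
        (Set.Ico_subset_Icc_self hx) hx.1
      have h2 : y₁ < q := hgx ▸ hmono (Set.Ico_subset_Icc_self hx)
        (Set.right_mem_Icc.2 haj.le) hx.2
      have hpL : p ≤ b (i - 1) := by rcases hp' with h | h; exact h; linarith [hy₁.2]
      have hqR : b i ≤ q := by rcases hq' with h | h; linarith [hy₁.1]; exact h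
      exact intermediate_value_Ico haj.le hgcj ⟨by linarith [hy₂.1], by linarith [hy₂.2]⟩
  · -- g strictly decreasing on the closed piece
    have hmono : StrictAntiOn g (Set.Icc (a (j - 1)) (a j)) := by
      apply strictAntiOn_of_deriv_neg (convex_Icc _ _) hgcj
      intro z hz
      rw [interior_Icc] at hz
      rw [(hd z hz).deriv]
      exact hneg z hz
    by_cases hcase : j = k
    · rw [if_pos hcase] at hx ⊢
      subst hcase
      have h1 : q ≤ y₁ := hgx ▸ hmono.antitoneOn hx (Set.right_mem_Icc.2 haj.le) hx.2
      have h2 : y₁ ≤ p := hgx ▸ hmono.antitoneOn (Set.left_mem_Icc.2 haj.le) hx hx.1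
      have hqL : q ≤ b (i - 1) := by rcases hq' with h | h; exact h; linarith [hy₁.2]
      have hpR : b i ≤ p := by rcases hp' with h | h; linarith [hy₁.1]; exact h
      exact intermediate_value_Icc' haj.le hgcj ⟨by linarith [hy₂.1], by linarith [hy₂.2]⟩
    · rw [if_neg hcase] at hx ⊢
      have h1 : q < y₁ := hgx ▸ hmono (Set.Ico_subset_Icc_self hx)
        (Set.right_mem_Icc.2 haj.le) hx.2
      have h2 : y₁ ≤ p := hgx ▸ hmono.antitoneOn (Set.left_mem_Icc.2 haj.le)
        (Set.Ico_subset_Icc_self hx) hx.1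
      have hqL : q ≤ b (i - 1) := by rcases hq' with h | h; exact h; linarith [hy₁.2]
      have hpR : b i ≤ p := by rcases hp' with h | h; linarith [hy₁.1]; exact h
      exact intermediate_value_Ico' haj.le hgcj ⟨by linarith [hy₂.1], by linarith [hy₂.2]⟩
end

section
/- Let y ∈ [g_min, g_max] with y ∉ B, and let j ∈ {1,…,k}. Then j ∈ I(y) if and only if 0 < (y − g(α_{j−1}))·sign(λ_j) < |λ_j|; equivalently, y lies strictly between g(α_{j−1}) and g(α_j). -/
/-! On the closed piece `[α_{j-1}, α_j]` the function `g` is continuous and strictly monotone (the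
strict monotonicity on the open piece extends to its closure by continuity), so by the intermediate
value theorem it maps the piece onto the closed interval between `g(α_{j-1})` and `g(α_j)`. Since `y`
is not a value of `g` at a partition point, `y` is attained on `A_j` exactly when it lies strictly
between these two values, and the sign condition is the same statement in other terms. -/

open Set

section ExtendToIcc

variable {α β : Type*} [LinearOrder α] [TopologicalSpace α] [OrderTopology α] [DenselyOrdered α]
  [LinearOrder β] [TopologicalSpace β] [OrderClosedTopology β] {f : α → β} {a b : α}

theorem StrictMonoOn.Icc_of_Ioo (hf : StrictMonoOn f (Ioo a b)) (hc : ContinuousOn f (Icc a b)) :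
    StrictMonoOn f (Icc a b) := by
  intro x hx y hy hxy
  obtain ⟨u, hxu, huy⟩ := exists_between hxy
  obtain ⟨v, huv, hvy⟩ := exists_between huy
  have hu : u ∈ Ioo a b := ⟨hx.1.trans_lt hxu, huy.trans_le hy.2⟩
  have hv : v ∈ Ioo a b := ⟨hx.1.trans_lt (hxu.trans huv), hvy.trans_le hy.2⟩
  have hxu' : f x ≤ f u := by
    refine ContinuousWithinAt.closure_le (s := Ioo x u) ?_
      ((hc x hx).mono fun t ht => ⟨hx.1.trans ht.1.le, ht.2.le.trans hu.2.le⟩)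
      continuousWithinAt_const fun t ht => (hf ⟨hx.1.trans_lt ht.1, ht.2.trans hu.2⟩ hu ht.2).le
    rw [closure_Ioo hxu.ne]
    exact left_mem_Icc.2 hxu.le
  have hvy' : f v ≤ f y := by
    refine ContinuousWithinAt.closure_le (s := Ioo v y) ?_ continuousWithinAt_const
      ((hc y hy).mono fun t ht => ⟨hv.1.le.trans ht.1.le, ht.2.le.trans hy.2⟩)
      fun t ht => (hf hv ⟨hv.1.trans ht.1, ht.2.trans_le hy.2⟩ ht.1).le
    rw [closure_Ioo hvy.ne]
    exact right_mem_Icc.2 hvy.le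
  exact hxu'.trans_lt ((hf hu hv huv).trans_le hvy')

theorem StrictAntiOn.Icc_of_Ioo (hf : StrictAntiOn f (Ioo a b)) (hc : ContinuousOn f (Icc a b)) :
    StrictAntiOn f (Icc a b) :=
  StrictMonoOn.Icc_of_Ioo (β := βᵒᵈ) hf hc

end ExtendToIcc

theorem ContinuousOn.image_Icc_of_strictMonoOn_or_strictAntiOn {α β : Type*}
    [ConditionallyCompleteLinearOrder α] [TopologicalSpace α] [OrderTopology α] [DenselyOrdered α]
    [LinearOrder β] [TopologicalSpace β] [OrderClosedTopology β] {f : α → β} {a b : α} (hab : a ≤ b)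
    (hc : ContinuousOn f (Icc a b))
    (hf : StrictMonoOn f (Icc a b) ∨ StrictAntiOn f (Icc a b)) :
    f '' Icc a b = uIcc (f a) (f b) := by
  rcases hf with hf | hf
  · rw [hc.image_Icc_of_monotoneOn hab hf.monotoneOn,
      uIcc_of_le (hf.monotoneOn (left_mem_Icc.2 hab) (right_mem_Icc.2 hab) hab)]
  · rw [hc.image_Icc_of_antitoneOn hab hf.antitoneOn,
      uIcc_of_ge (hf.antitoneOn (left_mem_Icc.2 hab) (right_mem_Icc.2 hab) hab)]

theorem mem_uIcc_iff_of_ne {α : Type*} [LinearOrder α] {p q y : α} (hp : p ≠ y) (hq : q ≠ y) :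
    y ∈ uIcc p q ↔ min p q < y ∧ y < max p q := by
  rcases le_total p q with h | h
  · rw [uIcc_of_le h, min_eq_left h, max_eq_right h]
    exact ⟨fun hy => ⟨hy.1.lt_of_ne hp, hy.2.lt_of_ne hq.symm⟩, fun hy => ⟨hy.1.le, hy.2.le⟩⟩
  · rw [uIcc_of_ge h, min_eq_right h, max_eq_left h]
    exact ⟨fun hy => ⟨hy.1.lt_of_ne hq, hy.2.lt_of_ne hp.symm⟩, fun hy => ⟨hy.1.le, hy.2.le⟩⟩

theorem sign_mul_sub_between_iff (p q y : ℝ) :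
    (0 < (y - p) * Real.sign (q - p) ∧ (y - p) * Real.sign (q - p) < |q - p|) ↔
      (min p q < y ∧ y < max p q) := by
  rcases lt_trichotomy p q with h | rfl | h
  · have hpos : 0 < q - p := sub_pos.2 h
    rw [Real.sign_of_pos hpos, abs_of_pos hpos, min_eq_left h.le, max_eq_right h.le]
    constructor <;> rintro ⟨h1, h2⟩ <;> constructor <;> linarith
  · simp only [sub_self, Real.sign_zero, mul_zero, lt_irrefl, false_and, min_self, max_self]
    exact ⟨False.elim, fun h => (h.1.trans h.2).false.elim⟩
  · have hneg : q - p < 0 := sub_neg.2 h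
    rw [Real.sign_of_neg hneg, abs_of_neg hneg, min_eq_right h.le, max_eq_left h.le]
    constructor <;> rintro ⟨h1, h2⟩ <;> constructor <;> linarith

theorem mem_IdxSet_iff {g : ℝ → ℝ} {a : ℕ → ℝ} {k j : ℕ} {y : ℝ} (hj1 : 1 ≤ j) (hjk : j ≤ k)
    (hy : g (a j) ≠ y) : j ∈ IdxSet g a k y ↔ y ∈ g '' Icc (a (j - 1)) (a j) := by
  simp only [IdxSet, mem_ofPred_eq, hj1, hjk, true_and, mem_image]
  split_ifs with hjk'
  · subst hjk'
    rfl
  · constructor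
    · rintro ⟨x, hx, rfl⟩
      exact ⟨x, Ico_subset_Icc_self hx, rfl⟩
    · rintro ⟨x, hx, rfl⟩
      exact ⟨x, ⟨hx.1, hx.2.lt_of_ne (by rintro rfl; exact hy rfl)⟩, rfl⟩

theorem stmt5_general
    (α β : ℝ)
    (k : ℕ)
    (a : ℕ → ℝ) (ha0 : a 0 = α) (hak : a k = β)
    (hamono : ∀ j < k, a j < a (j + 1))
    (g g' : ℝ → ℝ)
    (hderiv : ∀ x ∈ Set.Icc α β, HasDerivWithinAt g (g' x) (Set.Icc α β) x)
    (hpiece : ∀ j, 1 ≤ j → j ≤ k →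
      StrictMonoOn g (Set.Ioo (a (j - 1)) (a j)) ∨ StrictAntiOn g (Set.Ioo (a (j - 1)) (a j)))
    (y : ℝ)
    (hyB : ∀ j ≤ k, g (a j) ≠ y)
    (j : ℕ) (hj1 : 1 ≤ j) (hjk : j ≤ k) :
    (j ∈ IdxSet g a k y ↔
      (0 < (y - g (a (j - 1))) * Real.sign (g (a j) - g (a (j - 1))) ∧
       (y - g (a (j - 1))) * Real.sign (g (a j) - g (a (j - 1))) < |g (a j) - g (a (j - 1))|)) ∧
    (j ∈ IdxSet g a k y ↔
      (min (g (a (j - 1))) (g (a j)) < y ∧ y < max (g (a (j - 1))) (g (a j)))) := by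
  have ha : StrictMonoOn a (Iic k) := strictMonoOn_Iic_of_lt_succ hamono
  have hlt : a (j - 1) < a j := ha (mem_Iic.2 (by omega)) (mem_Iic.2 hjk) (by omega)
  have hsub : Icc (a (j - 1)) (a j) ⊆ Icc α β := by
    rw [← ha0, ← hak]
    exact Icc_subset_Icc (ha.monotoneOn (mem_Iic.2 (by omega)) (mem_Iic.2 (by omega)) (by omega))
      (ha.monotoneOn (mem_Iic.2 hjk) (mem_Iic.2 le_rfl) hjk)
  have hcont : ContinuousOn g (Icc (a (j - 1)) (a j)) := fun x hx =>
    (hderiv x (hsub hx)).continuousWithinAt.mono hsub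
  have himage := hcont.image_Icc_of_strictMonoOn_or_strictAntiOn hlt.le
    ((hpiece j hj1 hjk).imp (·.Icc_of_Ioo hcont) (·.Icc_of_Ioo hcont))
  have hmem : j ∈ IdxSet g a k y ↔
      min (g (a (j - 1))) (g (a j)) < y ∧ y < max (g (a (j - 1))) (g (a j)) := by
    rw [mem_IdxSet_iff hj1 hjk (hyB j hjk), himage,
      mem_uIcc_iff_of_ne (hyB (j - 1) (by omega)) (hyB j hjk)]
  exact ⟨hmem.trans (sign_mul_sub_between_iff _ _ _).symm, hmem⟩

theorem stmt5
    (α β : ℝ) (hαβ : α < β)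
    (k : ℕ) (hk : 0 < k)
    (a : ℕ → ℝ) (ha0 : a 0 = α) (hak : a k = β)
    (hamono : ∀ j < k, a j < a (j + 1))
    (g g' : ℝ → ℝ)
    (hderiv : ∀ x ∈ Set.Icc α β, HasDerivWithinAt g (g' x) (Set.Icc α β) x)
    (hg'cont : ContinuousOn g' (Set.Icc α β))
    (hpiece : ∀ j, 1 ≤ j → j ≤ k →
      StrictMonoOn g (Set.Ioo (a (j - 1)) (a j)) ∨ StrictAntiOn g (Set.Ioo (a (j - 1)) (a j)))
    (hg'ne : ∀ j, 1 ≤ j → j ≤ k → ∀ x ∈ Set.Ioo (a (j - 1)) (a j), g' x ≠ 0)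
    (hcrit : ∀ j, 0 < j → j < k → g' (a j) = 0 ∧
      ((∀ᶠ x in nhdsWithin (a j) (Set.Icc α β \ {a j}), g x < g (a j)) ∨
       (∀ᶠ x in nhdsWithin (a j) (Set.Icc α β \ {a j}), g (a j) < g x)))
    (ℓ : ℕ) (b : ℕ → ℝ)
    (hbmono : ∀ i < ℓ, b i < b (i + 1))
    (hB : g '' {x | ∃ j ≤ k, a j = x} = {y | ∃ i ≤ ℓ, b i = y})
    (y : ℝ) (hy : y ∈ Set.Icc (b 0) (b ℓ))
    (hyB : ∀ j ≤ k, g (a j) ≠ y)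
    (j : ℕ) (hj1 : 1 ≤ j) (hjk : j ≤ k) :
    (j ∈ IdxSet g a k y ↔
      (0 < (y - g (a (j - 1))) * Real.sign (g (a j) - g (a (j - 1))) ∧
       (y - g (a (j - 1))) * Real.sign (g (a j) - g (a (j - 1))) < |g (a j) - g (a (j - 1))|)) ∧
    (j ∈ IdxSet g a k y ↔
      (min (g (a (j - 1))) (g (a j)) < y ∧ y < max (g (a (j - 1))) (g (a j)))) :=
  stmt5_general α β k a ha0 hak hamono g g' hderiv hpiece y hyB j hj1 hjk
end

section
/- The folding domain function ĝ is differentiable on [α,β] and its derivative satisfies ĝ′(x) = |g′(x)| for every x ∈ [α,β]. -/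
/-!
On each piece `[a j, a (j+1)]` the derivative `g'` does not vanish inside, so by Darboux's theorem
it has constant sign there; hence `g` is monotone on the closed piece and
`|g x - g (a j)| = ± (g x - g (a j))`, whose derivative is `± g' x = |g' x|` (the sign of `g'` at
the endpoints follows from monotonicity). Derivatives within adjacent closed intervals glue to a
derivative within their union.
-/

/-- The partial sums `m_j = |λ_1| + ⋯ + |λ_j|` of the absolute increments
`λ_i = g(α_i) - g(α_{i-1})`. -/
noncomputable def mseq (g : ℝ → ℝ) (a : ℕ → ℝ) : ℕ → ℝ :=
  fun j => ∑ i ∈ Finset.range j, |g (a (i + 1)) - g (a i)|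

open Set

theorem Set.OrdConnected.forall_deriv_pos_or_forall_deriv_neg {f f' : ℝ → ℝ} {s : Set ℝ}
    (hs : s.OrdConnected) (hf : ∀ x ∈ s, HasDerivWithinAt f (f' x) s x)
    (hf' : ∀ x ∈ s, f' x ≠ 0) : (∀ x ∈ s, 0 < f' x) ∨ (∀ x ∈ s, f' x < 0) := by
  by_contra! ⟨⟨x, hx, hx0⟩, ⟨y, hy, hy0⟩⟩
  obtain ⟨z, hz, hz0⟩ := (hs.image_hasDerivWithinAt hf).out (mem_image_of_mem f' hx)
    (mem_image_of_mem f' hy) ⟨hx0, hy0⟩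
  exact hf' z hz hz0

theorem hasDerivWithinAt_abs_sub_of_deriv_nonneg {f f' : ℝ → ℝ} {u v x : ℝ} (huv : u < v)
    (hf : ∀ y ∈ Icc u v, HasDerivWithinAt f (f' y) (Icc u v) y)
    (hf' : ∀ y ∈ Ioo u v, 0 ≤ f' y) (hx : x ∈ Icc u v) :
    HasDerivWithinAt (fun y => |f y - f u|) |f' x| (Icc u v) x := by
  have hmono : MonotoneOn f (Icc u v) :=
    monotoneOn_of_hasDerivWithinAt_nonneg (convex_Icc u v)
      (fun y hy => (hf y hy).continuousWithinAt)
      (fun y hy => (hf y (interior_subset hy)).mono interior_subset)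
      (fun y hy => hf' y (by rwa [interior_Icc] at hy))
  have habs : EqOn (fun y => |f y - f u|) (fun y => f y - f u) (Icc u v) := fun y hy =>
    abs_of_nonneg (sub_nonneg.2 (hmono (left_mem_Icc.2 huv.le) hy hy.1))
  have hx0 : 0 ≤ f' x :=
    (hf x hx).derivWithin (uniqueDiffOn_Icc huv x hx) ▸ hmono.derivWithin_nonneg
  rw [abs_of_nonneg hx0]
  exact ((hf x hx).sub_const (f u)).congr habs (habs hx)

theorem hasDerivWithinAt_abs_sub_of_deriv_ne_zero {f f' : ℝ → ℝ} {u v x : ℝ} (huv : u < v)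
    (hf : ∀ y ∈ Icc u v, HasDerivWithinAt f (f' y) (Icc u v) y)
    (hf' : ∀ y ∈ Ioo u v, f' y ≠ 0) (hx : x ∈ Icc u v) :
    HasDerivWithinAt (fun y => |f y - f u|) |f' x| (Icc u v) x := by
  rcases ordConnected_Ioo.forall_deriv_pos_or_forall_deriv_neg
    (fun y hy => (hf y (Ioo_subset_Icc_self hy)).mono Ioo_subset_Icc_self) hf' with hpos | hneg
  · exact hasDerivWithinAt_abs_sub_of_deriv_nonneg huv hf (fun y hy => (hpos y hy).le) hx
  · have := hasDerivWithinAt_abs_sub_of_deriv_nonneg (f := -f) (f' := -f') huv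
      (fun y hy => (hf y hy).neg) (fun y hy => neg_nonneg.2 (hneg y hy).le) hx
    simpa only [Pi.neg_apply, neg_sub_neg, abs_neg, abs_sub_comm (f u)] using this

theorem IsClosed.hasDerivWithinAt_of_mem {f : ℝ → ℝ} {f' x : ℝ} {s : Set ℝ} (hs : IsClosed s)
    (h : x ∈ s → HasDerivWithinAt f f' s x) : HasDerivWithinAt f f' s x := by
  by_cases hx : x ∈ s
  · exact h hx
  · exact HasFDerivWithinAt.of_notMem_closure (by rwa [hs.closure_eq])

theorem hasDerivWithinAt_Icc_of_Icc_of_Icc {f : ℝ → ℝ} {f' x a b c : ℝ}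
    (hab : x ∈ Icc a b → HasDerivWithinAt f f' (Icc a b) x)
    (hbc : x ∈ Icc b c → HasDerivWithinAt f f' (Icc b c) x) :
    HasDerivWithinAt f f' (Icc a c) x :=
  ((isClosed_Icc.hasDerivWithinAt_of_mem hab).union
    (isClosed_Icc.hasDerivWithinAt_of_mem hbc)).mono Icc_subset_Icc_union_Icc

theorem hasDerivWithinAt_Icc_of_forall_Icc_succ {f : ℝ → ℝ} {f' x : ℝ} {a : ℕ → ℝ} {k : ℕ}
    (hk : 0 < k)
    (h : ∀ j < k, x ∈ Icc (a j) (a (j + 1)) → HasDerivWithinAt f f' (Icc (a j) (a (j + 1))) x) :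
    HasDerivWithinAt f f' (Icc (a 0) (a k)) x := by
  induction k, hk using Nat.le_induction with
  | base => exact isClosed_Icc.hasDerivWithinAt_of_mem (h 0 zero_lt_one)
  | succ n _ ih =>
    exact hasDerivWithinAt_Icc_of_Icc_of_Icc (fun _ => ih fun j hj => h j (by omega))
      (h n (by omega))

theorem stmt7_general
    (α β : ℝ)
    (k : ℕ) (hk : 0 < k)
    (a : ℕ → ℝ) (ha0 : a 0 = α) (hak : a k = β)
    (hamono : ∀ j < k, a j < a (j + 1))
    (g g' : ℝ → ℝ)
    (hderiv : ∀ x ∈ Set.Icc α β, HasDerivWithinAt g (g' x) (Set.Icc α β) x)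
    (hg'ne : ∀ j, 1 ≤ j → j ≤ k → ∀ x ∈ Set.Ioo (a (j - 1)) (a j), g' x ≠ 0)
    (G : ℝ → ℝ)
    (hG : ∀ j, 1 ≤ j → j ≤ k → ∀ x ∈ Set.Icc (a (j - 1)) (a j),
      G x = mseq g a (j - 1) + |g x - g (a (j - 1))|)
 :
    ∀ x ∈ Set.Icc α β, HasDerivWithinAt G (|g' x|) (Set.Icc α β) x := by
  subst ha0 hak
  have ha : StrictMonoOn a (Iic k) := strictMonoOn_Iic_of_lt_succ fun j hj => by
    simpa using hamono j hj
  intro x _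
  refine hasDerivWithinAt_Icc_of_forall_Icc_succ hk fun j hj hxj => ?_
  have hsub : Icc (a j) (a (j + 1)) ⊆ Icc (a 0) (a k) :=
    Icc_subset_Icc (ha.monotoneOn (by simp) (by simp; omega) (Nat.zero_le j))
      (ha.monotoneOn (by simp; omega) (by simp) (by omega))
  have hGj : EqOn G (fun y => mseq g a j + |g y - g (a j)|) (Icc (a j) (a (j + 1))) :=
    fun y hy => by simpa using hG (j + 1) (by omega) (by omega) y hy
  have hpiece := hasDerivWithinAt_abs_sub_of_deriv_ne_zero (hamono j hj)
    (fun y hy => (hderiv y (hsub hy)).mono hsub)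
    (by simpa using hg'ne (j + 1) (by omega) (by omega)) hxj
  exact (hpiece.const_add _).congr hGj (hGj hxj)

theorem stmt7
    (α β : ℝ) (hαβ : α < β)
    (k : ℕ) (hk : 0 < k)
    (a : ℕ → ℝ) (ha0 : a 0 = α) (hak : a k = β)
    (hamono : ∀ j < k, a j < a (j + 1))
    (g g' : ℝ → ℝ)
    (hderiv : ∀ x ∈ Set.Icc α β, HasDerivWithinAt g (g' x) (Set.Icc α β) x)
    (hg'cont : ContinuousOn g' (Set.Icc α β))
    (hpiece : ∀ j, 1 ≤ j → j ≤ k →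
      StrictMonoOn g (Set.Ioo (a (j - 1)) (a j)) ∨ StrictAntiOn g (Set.Ioo (a (j - 1)) (a j)))
    (hg'ne : ∀ j, 1 ≤ j → j ≤ k → ∀ x ∈ Set.Ioo (a (j - 1)) (a j), g' x ≠ 0)
    (hcrit : ∀ j, 0 < j → j < k → g' (a j) = 0 ∧
      ((∀ᶠ x in nhdsWithin (a j) (Set.Icc α β \ {a j}), g x < g (a j)) ∨
       (∀ᶠ x in nhdsWithin (a j) (Set.Icc α β \ {a j}), g (a j) < g x)))
    (G : ℝ → ℝ)
    (hG : ∀ j, 1 ≤ j → j ≤ k → ∀ x ∈ Set.Icc (a (j - 1)) (a j),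
      G x = mseq g a (j - 1) + |g x - g (a (j - 1))|)
 :
    ∀ x ∈ Set.Icc α β, HasDerivWithinAt G (|g' x|) (Set.Icc α β) x :=
  stmt7_general α β k hk a ha0 hak hamono g g' hderiv hg'ne G hG
end

section
/- Let y ∈ (b_{i−1}, b_i) for some i ∈ {1,…,ℓ} and let j ∈ I(y). Then u_j(y) ∈ [m_{j−1}, m_j], the point x_j(y) := η(u_j(y)) belongs to [α_{j−1}, α_j], g(x_j(y)) = y, and x_j(y) is the unique point of [α_{j−1}, α_j] mapped by g to y; that is, η(u_j(y)) = (g restricted to (α_{j−1}, α_j))⁻¹(y). -/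
open Set

private lemma strictMonoOn_Icc_of_Ioo' {g : ℝ → ℝ} {c d : ℝ} (hcd : c < d)
    (hc : ContinuousOn g (Set.Icc c d)) (hm : StrictMonoOn g (Set.Ioo c d)) :
    StrictMonoOn g (Set.Icc c d) := by
  have hle_left : ∀ t ∈ Set.Ioo c d, g c ≤ g t := by
    intro t ht
    have hne : (nhdsWithin c (Set.Ioo c t)).NeBot := left_nhdsWithin_Ioo_neBot ht.1
    have hsub : Set.Ioo c t ⊆ Set.Icc c d := fun s hs => ⟨hs.1.le, hs.2.le.trans ht.2.le⟩
    have hlim : Filter.Tendsto g (nhdsWithin c (Set.Ioo c t)) (nhds (g c)) :=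
      (hc c (Set.left_mem_Icc.2 hcd.le)).mono_left (nhdsWithin_mono c hsub)
    refine le_of_tendsto hlim ?_
    filter_upwards [self_mem_nhdsWithin] with s hs
    exact (hm ⟨hs.1, hs.2.trans ht.2⟩ ht hs.2).le
  have hle_right : ∀ t ∈ Set.Ioo c d, g t ≤ g d := by
    intro t ht
    have hne : (nhdsWithin d (Set.Ioo t d)).NeBot := right_nhdsWithin_Ioo_neBot ht.2
    have hsub : Set.Ioo t d ⊆ Set.Icc c d := fun s hs => ⟨ht.1.le.trans hs.1.le, hs.2.le⟩
    have hlim : Filter.Tendsto g (nhdsWithin d (Set.Ioo t d)) (nhds (g d)) :=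
      (hc d (Set.right_mem_Icc.2 hcd.le)).mono_left (nhdsWithin_mono d hsub)
    refine ge_of_tendsto hlim ?_
    filter_upwards [self_mem_nhdsWithin] with s hs
    exact (hm ht ⟨ht.1.trans hs.1, hs.2⟩ hs.1).le
  intro x1 hx1 x2 hx2 h12
  rcases eq_or_lt_of_le hx1.1 with h1 | h1
  · rcases eq_or_lt_of_le hx2.2 with h2 | h2
    · -- x1 = c, x2 = d
      have hs1 : c + (d - c)/3 ∈ Set.Ioo c d := by constructor <;> nlinarith
      have hs2 : c + 2*(d - c)/3 ∈ Set.Ioo c d := by constructor <;> nlinarith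
      have := hm hs1 hs2 (by nlinarith)
      have h3 := hle_left _ hs1
      have h4 := hle_right _ hs2
      rw [← h1, h2]; linarith
    · rcases eq_or_lt_of_le hx2.1 with h3 | h3
      · exact absurd h12 (by rw [← h1, ← h3]; exact lt_irrefl _)
      · -- x1 = c, x2 ∈ Ioo
        have hs : (c + x2)/2 ∈ Set.Ioo c d := by constructor <;> nlinarith [hx2.2]
        have := hm hs ⟨h3, h2⟩ (by nlinarith)
        have h4 := hle_left _ hs
        rw [← h1]; linarith
  · rcases eq_or_lt_of_le hx2.2 with h2 | h2
    · -- x1 ∈ Ioo, x2 = d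
      have hx1d : x1 < d := by rw [← h2]; exact h12
      have hs : (x1 + d)/2 ∈ Set.Ioo c d := by constructor <;> nlinarith
      have := hm ⟨h1, hx1d⟩ hs (by nlinarith)
      have h4 := hle_right _ hs
      rw [h2]; linarith
    · exact hm ⟨h1, h12.trans h2⟩ ⟨h1.trans h12, h2⟩ h12

private lemma strictAntiOn_Icc_of_Ioo' {g : ℝ → ℝ} {c d : ℝ} (hcd : c < d)
    (hc : ContinuousOn g (Set.Icc c d)) (hm : StrictAntiOn g (Set.Ioo c d)) :
    StrictAntiOn g (Set.Icc c d) := by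
  have h := strictMonoOn_Icc_of_Ioo' (g := fun x => -g x) hcd hc.neg
    (fun x hx y hy hxy => neg_lt_neg (hm hx hy hxy))
  intro x1 hx1 x2 hx2 h12
  have := h hx1 hx2 h12
  simp only [neg_lt_neg_iff] at this
  exact this

theorem stmt10
    (α β : ℝ) (hαβ : α < β)
    (k : ℕ) (hk : 0 < k)
    (a : ℕ → ℝ) (ha0 : a 0 = α) (hak : a k = β)
    (hamono : ∀ j < k, a j < a (j + 1))
    (g g' : ℝ → ℝ)
    (hderiv : ∀ x ∈ Set.Icc α β, HasDerivWithinAt g (g' x) (Set.Icc α β) x)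
    (hg'cont : ContinuousOn g' (Set.Icc α β))
    (hpiece : ∀ j, 1 ≤ j → j ≤ k →
      StrictMonoOn g (Set.Ioo (a (j - 1)) (a j)) ∨ StrictAntiOn g (Set.Ioo (a (j - 1)) (a j)))
    (hg'ne : ∀ j, 1 ≤ j → j ≤ k → ∀ x ∈ Set.Ioo (a (j - 1)) (a j), g' x ≠ 0)
    (hcrit : ∀ j, 0 < j → j < k → g' (a j) = 0 ∧
      ((∀ᶠ x in nhdsWithin (a j) (Set.Icc α β \ {a j}), g x < g (a j)) ∨
       (∀ᶠ x in nhdsWithin (a j) (Set.Icc α β \ {a j}), g (a j) < g x)))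
    (ℓ : ℕ) (b : ℕ → ℝ)
    (hbmono : ∀ i < ℓ, b i < b (i + 1))
    (hB : g '' {x | ∃ j ≤ k, a j = x} = {y | ∃ i ≤ ℓ, b i = y})
    (G : ℝ → ℝ)
    (hG : ∀ j, 1 ≤ j → j ≤ k → ∀ x ∈ Set.Icc (a (j - 1)) (a j),
      G x = mseq g a (j - 1) + |g x - g (a (j - 1))|)
    (e : ℝ → ℝ)
    (heG : ∀ x ∈ Set.Icc α β, e (G x) = x)
    (hGe : ∀ u ∈ Set.Icc 0 (mseq g a k), G (e u) = u)
    (i : ℕ) (hi1 : 1 ≤ i) (hiℓ : i ≤ ℓ)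
    (y : ℝ) (hy : y ∈ Set.Ioo (b (i - 1)) (b i))
    (j : ℕ) (hj : j ∈ IdxSet g a k y)
    (u : ℝ)
    (hu : u = mseq g a (j - 1) + (y - g (a (j - 1))) * Real.sign (g (a j) - g (a (j - 1)))) :
    u ∈ Set.Icc (mseq g a (j - 1)) (mseq g a j) ∧
    e u ∈ Set.Icc (a (j - 1)) (a j) ∧
    g (e u) = y ∧
    ∀ x ∈ Set.Icc (a (j - 1)) (a j), g x = y → x = e u := by
  obtain ⟨hj1, hjk, x, hxmem, hgx⟩ := hj
  have hjj : j - 1 + 1 = j := Nat.succ_pred_eq_of_pos hj1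
  -- monotonicity of a up to k
  have haux : ∀ q, q ≤ k → ∀ p, p ≤ q → a p ≤ a q := by
    intro q hq
    induction q with
    | zero => intro p hp; interval_cases p; exact le_rfl
    | succ n ih =>
      intro p hp
      rcases Nat.lt_or_ge p (n + 1) with h | h
      · exact le_trans (ih (by omega) p (by omega)) (hamono n (by omega)).le
      · have : p = n + 1 := by omega
        subst this; exact le_rfl
  -- monotonicity of b up to ℓ
  have hbaux : ∀ q, q ≤ ℓ → ∀ p, p ≤ q → b p ≤ b q := by
    intro q hq
    induction q with
    | zero => intro p hp; interval_cases p; exact le_rfl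
    | succ n ih =>
      intro p hp
      rcases Nat.lt_or_ge p (n + 1) with h | h
      · exact le_trans (ih (by omega) p (by omega)) (hbmono n (by omega)).le
      · have : p = n + 1 := by omega
        subst this; exact le_rfl
  have hlt : a (j - 1) < a j := by
    have := hamono (j - 1) (by omega)
    rwa [hjj] at this
  have hsubIcc : Set.Icc (a (j - 1)) (a j) ⊆ Set.Icc α β := by
    intro z hz
    refine ⟨?_, ?_⟩
    · rw [← ha0]; exact le_trans (haux (j - 1) (by omega) 0 (by omega)) hz.1
    · rw [← hak]; exact le_trans hz.2 (haux k le_rfl j hjk)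
  have hgc : ContinuousOn g (Set.Icc α β) := fun z hz => (hderiv z hz).continuousWithinAt
  have hgc' : ContinuousOn g (Set.Icc (a (j - 1)) (a j)) := hgc.mono hsubIcc
  have hyB : ∀ m, m ≤ ℓ → b m ≠ y := by
    intro m hm h
    rcases le_or_gt m (i - 1) with h1 | h1
    · have := hbaux (i - 1) (by omega) m h1
      have := hy.1; linarith
    · have := hbaux m hm i (by omega)
      have := hy.2; linarith
  have hne : ∀ p, p ≤ k → g (a p) ≠ y := by
    intro p hp h
    have hmem : g (a p) ∈ {y | ∃ i ≤ ℓ, b i = y} := by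
      rw [← hB]; exact ⟨a p, ⟨p, hp, rfl⟩, rfl⟩
    obtain ⟨m, hm, hbm⟩ := hmem
    exact hyB m hm (hbm.trans h)
  have hxIcc : x ∈ Set.Icc (a (j - 1)) (a j) := by
    split_ifs at hxmem with h
    · subst h; exact hxmem
    · exact ⟨hxmem.1, hxmem.2.le⟩
  have hxIoo : x ∈ Set.Ioo (a (j - 1)) (a j) := by
    refine ⟨lt_of_le_of_ne hxIcc.1 ?_, lt_of_le_of_ne hxIcc.2 ?_⟩
    · intro h; exact hne (j - 1) (by omega) (by rw [h]; exact hgx)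
    · intro h; exact hne j hjk (by rw [← h]; exact hgx)
  have hmj : mseq g a j = mseq g a (j - 1) + |g (a j) - g (a (j - 1))| := by
    have h := Finset.sum_range_succ (fun i => |g (a (i + 1)) - g (a i)|) (j - 1)
    rw [hjj] at h
    simpa [mseq, hjj] using h
  have hmemL : a (j - 1) ∈ Set.Icc (a (j - 1)) (a j) := ⟨le_rfl, hlt.le⟩
  have hmemR : a j ∈ Set.Icc (a (j - 1)) (a j) := ⟨hlt.le, le_rfl⟩
  -- key facts, established per monotonicity case
  obtain ⟨hinj, habs, hbound⟩ :
      Set.InjOn g (Set.Icc (a (j - 1)) (a j)) ∧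
      (y - g (a (j - 1))) * Real.sign (g (a j) - g (a (j - 1))) = |y - g (a (j - 1))| ∧
      |y - g (a (j - 1))| ≤ |g (a j) - g (a (j - 1))| := by
    rcases hpiece j hj1 hjk with hm | hm
    · have hM := strictMonoOn_Icc_of_Ioo' hlt hgc' hm
      have hy1 : g (a (j - 1)) < y := hgx ▸ hM hmemL hxIcc hxIoo.1
      have hy2 : y < g (a j) := hgx ▸ hM hxIcc hmemR hxIoo.2
      refine ⟨hM.injOn, ?_, ?_⟩
      · rw [Real.sign_of_pos (by linarith), mul_one, abs_of_pos (by linarith)]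
      · rw [abs_of_pos (by linarith), abs_of_pos (by linarith)]; linarith
    · have hM := strictAntiOn_Icc_of_Ioo' hlt hgc' hm
      have hy1 : y < g (a (j - 1)) := hgx ▸ hM hmemL hxIcc hxIoo.1
      have hy2 : g (a j) < y := hgx ▸ hM hxIcc hmemR hxIoo.2
      refine ⟨hM.injOn, ?_, ?_⟩
      · rw [Real.sign_of_neg (by linarith), abs_of_neg (by linarith)]; ring
      · rw [abs_of_neg (by linarith), abs_of_neg (by linarith)]; linarith
  have hu' : u = mseq g a (j - 1) + |y - g (a (j - 1))| := by rw [hu, habs]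
  have hGx : G x = u := by
    rw [hG j hj1 hjk x hxIcc, hgx, hu']
  have hex : e u = x := by rw [← hGx]; exact heG x (hsubIcc hxIcc)
  refine ⟨⟨?_, ?_⟩, ?_, ?_, ?_⟩
  · rw [hu']; linarith [abs_nonneg (y - g (a (j - 1)))]
  · rw [hu', hmj]; linarith [hbound]
  · rw [hex]; exact hxIcc
  · rw [hex]; exact hgx
  · intro x' hx' hgx'
    rw [hex]
    exact hinj hx' hxIcc (hgx'.trans hgx.symm)
end

section
/- Let y ∈ (b_{i−1}, b_i) for some i ∈ {1,…,ℓ}. Then the full preimage of y under g is exactly g⁻¹({y}) = {η(u_j(y)) : j ∈ I(y)}, these points are pairwise distinct, and consequently #g⁻¹({y}) = #I(y). -/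
lemma lim_le' {g : ℝ → ℝ} {s : Set ℝ} {z c : ℝ} (hne : (nhdsWithin z s).NeBot)
    (hc : ContinuousWithinAt g s z) (h : ∀ t ∈ s, g t ≤ c) : g z ≤ c :=
  le_of_tendsto hc (eventually_nhdsWithin_of_forall h)

lemma lim_ge' {g : ℝ → ℝ} {s : Set ℝ} {z c : ℝ} (hne : (nhdsWithin z s).NeBot)
    (hc : ContinuousWithinAt g s z) (h : ∀ t ∈ s, c ≤ g t) : c ≤ g z :=
  ge_of_tendsto hc (eventually_nhdsWithin_of_forall h)

lemma neBot_left' {p q : ℝ} (h : p < q) : (nhdsWithin p (Set.Ioo p q)).NeBot := by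
  rw [← mem_closure_iff_nhdsWithin_neBot, closure_Ioo h.ne]
  exact ⟨le_refl p, h.le⟩

lemma neBot_right' {p q : ℝ} (h : p < q) : (nhdsWithin q (Set.Ioo p q)).NeBot := by
  rw [← mem_closure_iff_nhdsWithin_neBot, closure_Ioo h.ne]
  exact ⟨h.le, le_refl q⟩

theorem stmt11
    (α β : ℝ) (hαβ : α < β)
    (k : ℕ) (hk : 0 < k)
    (a : ℕ → ℝ) (ha0 : a 0 = α) (hak : a k = β)
    (hamono : ∀ j < k, a j < a (j + 1))
    (g g' : ℝ → ℝ)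
    (hderiv : ∀ x ∈ Set.Icc α β, HasDerivWithinAt g (g' x) (Set.Icc α β) x)
    (hg'cont : ContinuousOn g' (Set.Icc α β))
    (hpiece : ∀ j, 1 ≤ j → j ≤ k →
      StrictMonoOn g (Set.Ioo (a (j - 1)) (a j)) ∨ StrictAntiOn g (Set.Ioo (a (j - 1)) (a j)))
    (hg'ne : ∀ j, 1 ≤ j → j ≤ k → ∀ x ∈ Set.Ioo (a (j - 1)) (a j), g' x ≠ 0)
    (hcrit : ∀ j, 0 < j → j < k → g' (a j) = 0 ∧
      ((∀ᶠ x in nhdsWithin (a j) (Set.Icc α β \ {a j}), g x < g (a j)) ∨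
       (∀ᶠ x in nhdsWithin (a j) (Set.Icc α β \ {a j}), g (a j) < g x)))
    (ℓ : ℕ) (b : ℕ → ℝ)
    (hbmono : ∀ i < ℓ, b i < b (i + 1))
    (hB : g '' {x | ∃ j ≤ k, a j = x} = {y | ∃ i ≤ ℓ, b i = y})
    (G : ℝ → ℝ)
    (hG : ∀ j, 1 ≤ j → j ≤ k → ∀ x ∈ Set.Icc (a (j - 1)) (a j),
      G x = mseq g a (j - 1) + |g x - g (a (j - 1))|)
    (e : ℝ → ℝ)
    (heG : ∀ x ∈ Set.Icc α β, e (G x) = x)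
    (hGe : ∀ u ∈ Set.Icc 0 (mseq g a k), G (e u) = u)
    (i : ℕ) (hi1 : 1 ≤ i) (hiℓ : i ≤ ℓ)
    (y : ℝ) (hy : y ∈ Set.Ioo (b (i - 1)) (b i)) :
    {x ∈ Set.Icc α β | g x = y} =
      (fun j => e (mseq g a (j - 1) +
        (y - g (a (j - 1))) * Real.sign (g (a j) - g (a (j - 1))))) '' IdxSet g a k y ∧
    Set.InjOn (fun j => e (mseq g a (j - 1) +
      (y - g (a (j - 1))) * Real.sign (g (a j) - g (a (j - 1))))) (IdxSet g a k y) ∧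
    {x ∈ Set.Icc α β | g x = y}.ncard = (IdxSet g a k y).ncard := by
  -- monotonicity of a on [0,k]
  have haLE : ∀ m n, m ≤ n → n ≤ k → a m ≤ a n := by
    intro m n hmn hnk
    induction n with
    | zero => simp_all
    | succ n ih =>
      rcases Nat.lt_or_ge m (n+1) with h | h
      · have h1 : a m ≤ a n := ih (by omega) (by omega)
        exact h1.trans (hamono n (by omega)).le
      · have : m = n + 1 := by omega
        simp [this]
  have haα : ∀ m, m ≤ k → α ≤ a m ∧ a m ≤ β := by
    intro m hm
    constructor
    · rw [← ha0]; exact haLE 0 m (by omega) hm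
    · rw [← hak]; exact haLE m k hm le_rfl
  -- strict monotonicity of b on [0,ℓ]
  have hbLT : ∀ m n, m < n → n ≤ ℓ → b m < b n := by
    intro m n hmn hnl
    induction n with
    | zero => omega
    | succ n ih =>
      rcases Nat.lt_or_ge m n with h | h
      · exact (ih h (by omega)).trans (hbmono n (by omega))
      · have : m = n := by omega
        rw [this]; exact hbmono n (by omega)
  -- y is not a critical value
  have hyB : ∀ m, m ≤ k → g (a m) ≠ y := by
    intro m hm hgm
    have hmem : g (a m) ∈ {y | ∃ i ≤ ℓ, b i = y} := by
      rw [← hB]; exact ⟨a m, ⟨m, hm, rfl⟩, rfl⟩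
    obtain ⟨n, hn, hbn⟩ := hmem
    rcases Nat.lt_or_ge n i with h | h
    · have : b n ≤ b (i - 1) := by
        rcases Nat.lt_or_ge n (i-1) with h' | h'
        · exact (hbLT n (i-1) h' (by omega)).le
        · have : n = i - 1 := by omega
          simp [this]
      rw [hbn, hgm] at this
      exact absurd this (not_le.mpr hy.1)
    · have : b i ≤ b n := by
        rcases Nat.lt_or_ge i n with h' | h'
        · exact (hbLT i n h' hn).le
        · have : n = i := by omega
          simp [this]
      rw [hbn, hgm] at this
      exact absurd this (not_le.mpr hy.2)
  have hgc : ContinuousOn g (Set.Icc α β) := fun x hx => (hderiv x hx).continuousWithinAt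
  -- key computation: for x in the open piece j with g x = y, e (u_j y) = x
  have key : ∀ j, 1 ≤ j → j ≤ k → ∀ x ∈ Set.Ioo (a (j-1)) (a j), g x = y →
      e (mseq g a (j - 1) +
        (y - g (a (j - 1))) * Real.sign (g (a j) - g (a (j - 1)))) = x := by
    intro j hj1 hjk x hx hgx
    set p := a (j - 1) with hp
    set q := a j with hq
    have hjj : j - 1 + 1 = j := by omega
    have hpq : p < q := by
      have := hamono (j-1) (by omega)
      rwa [hjj] at this
    have hpα : α ≤ p := (haα (j-1) (by omega)).1
    have hqβ : q ≤ β := (haα j hjk).2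
    have hsub : Set.Ioo p q ⊆ Set.Icc α β := fun t ht => ⟨hpα.trans ht.1.le, ht.2.le.trans hqβ⟩
    have hxI : x ∈ Set.Icc α β := hsub hx
    have hGx : G x = mseq g a (j-1) + |g x - g p| :=
      hG j hj1 hjk x ⟨hx.1.le, hx.2.le⟩
    have hyp : g p ≠ y := hyB (j-1) (by omega)
    have hyq : g q ≠ y := hyB j hjk
    have hcp : ContinuousWithinAt g (Set.Ioo p x) p :=
      (hgc p ⟨hpα, hpq.le.trans hqβ⟩).mono
        (fun t ht => hsub ⟨ht.1, ht.2.trans hx.2⟩)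
    have hcq : ContinuousWithinAt g (Set.Ioo x q) q :=
      (hgc q ⟨hpα.trans hpq.le, hqβ⟩).mono
        (fun t ht => hsub ⟨hx.1.trans ht.1, ht.2⟩)
    have habs : |g x - g p| = (y - g p) * Real.sign (g q - g p) := by
      rcases hpiece j hj1 hjk with hm | hm
      · have h1 : g p ≤ g x :=
          lim_le' (neBot_left' hx.1) hcp
            (fun t ht => (hm ⟨ht.1, ht.2.trans hx.2⟩ hx ht.2).le)
        have h2 : g x ≤ g q :=
          lim_ge' (neBot_right' hx.2) hcq
            (fun t ht => (hm hx ⟨hx.1.trans ht.1, ht.2⟩ ht.1).le)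
        have h1' : g p < y := lt_of_le_of_ne (hgx ▸ h1) (hgx ▸ hyp)
        have h2' : y < g q := lt_of_le_of_ne (hgx ▸ h2) (Ne.symm (hgx ▸ hyq))
        rw [Real.sign_of_pos (by linarith), hgx, abs_of_pos (by linarith)]
        ring
      · have h1 : g x ≤ g p :=
          lim_ge' (neBot_left' hx.1) hcp
            (fun t ht => (hm ⟨ht.1, ht.2.trans hx.2⟩ hx ht.2).le)
        have h2 : g q ≤ g x :=
          lim_le' (neBot_right' hx.2) hcq
            (fun t ht => (hm hx ⟨hx.1.trans ht.1, ht.2⟩ ht.1).le)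
        have h1' : y < g p := lt_of_le_of_ne (hgx ▸ h1) (Ne.symm (hgx ▸ hyp))
        have h2' : g q < y := lt_of_le_of_ne (hgx ▸ h2) (hgx ▸ hyq)
        rw [Real.sign_of_neg (by linarith), hgx, abs_of_neg (by linarith)]
        ring
    rw [← habs, ← hGx]
    exact heG x hxI
  -- each member of IdxSet has a witness in the open interval
  have wit : ∀ j ∈ IdxSet g a k y, 1 ≤ j ∧ j ≤ k ∧
      ∃ x ∈ Set.Ioo (a (j-1)) (a j), g x = y := by
    intro j hj
    obtain ⟨hj1, hjk, x, hxmem, hgx⟩ := hj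
    refine ⟨hj1, hjk, x, ?_, hgx⟩
    by_cases hjek : j = k
    · rw [if_pos hjek] at hxmem
      subst hjek
      have h1 : x ≠ a (j-1) := fun h => hyB (j-1) (by omega) (h ▸ hgx)
      have h2 : x ≠ a j := fun h => hyB j le_rfl (h ▸ hgx)
      exact ⟨lt_of_le_of_ne hxmem.1 (Ne.symm h1), lt_of_le_of_ne hxmem.2 h2⟩
    · rw [if_neg hjek] at hxmem
      have h1 : x ≠ a (j-1) := fun h => hyB (j-1) (by omega) (h ▸ hgx)
      exact ⟨lt_of_le_of_ne hxmem.1 (Ne.symm h1), hxmem.2⟩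
  -- locating a point of the preimage in an open piece
  have locate : ∀ x ∈ Set.Icc α β, g x = y →
      ∃ j, 1 ≤ j ∧ j ≤ k ∧ x ∈ Set.Ioo (a (j-1)) (a j) := by
    intro x hx hgx
    have hxa : ∀ m, m ≤ k → x ≠ a m := fun m hm h => hyB m hm (h ▸ hgx)
    set T : Finset ℕ := (Finset.range (k+1)).filter (fun m => a m < x) with hT
    have h0T : 0 ∈ T := by
      simp only [hT, Finset.mem_filter, Finset.mem_range]
      refine ⟨by omega, ?_⟩
      rw [ha0]
      exact lt_of_le_of_ne hx.1 (Ne.symm (ha0 ▸ hxa 0 (by omega)))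
    have hTne : T.Nonempty := ⟨0, h0T⟩
    have hj0T := T.max'_mem hTne
    set j0 := T.max' hTne with hj0
    simp only [hT, Finset.mem_filter, Finset.mem_range] at hj0T
    obtain ⟨hj0k, hj0x⟩ := hj0T
    have hj0ltk : j0 < k := by
      rcases Nat.lt_or_ge j0 k with h | h
      · exact h
      · exfalso
        have : j0 = k := by omega
        rw [this, hak] at hj0x
        exact absurd hx.2 (not_le.mpr hj0x)
    have hxlt : x < a (j0+1) := by
      rcases lt_or_ge x (a (j0+1)) with h | h
      · exact h
      · exfalso
        have hlt : a (j0+1) < x :=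
          lt_of_le_of_ne h (Ne.symm (hxa (j0+1) (by omega)))
        have hmem : j0 + 1 ∈ T := by
          simp only [hT, Finset.mem_filter, Finset.mem_range]
          exact ⟨by omega, hlt⟩
        have := T.le_max' _ hmem
        omega
    refine ⟨j0 + 1, by omega, by omega, ?_⟩
    simpa using ⟨hj0x, hxlt⟩
  -- the set equality
  have hseteq : {x ∈ Set.Icc α β | g x = y} =
      (fun j => e (mseq g a (j - 1) +
        (y - g (a (j - 1))) * Real.sign (g (a j) - g (a (j - 1))))) '' IdxSet g a k y := by
    ext x
    simp only [Set.mem_setOf_eq, Set.mem_image]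
    constructor
    · rintro ⟨hx, hgx⟩
      obtain ⟨j, hj1, hjk, hxIoo⟩ := locate x hx hgx
      refine ⟨j, ⟨hj1, hjk, x, ?_, hgx⟩, key j hj1 hjk x hxIoo hgx⟩
      by_cases h : j = k
      · rw [if_pos h]; subst h; exact ⟨hxIoo.1.le, hxIoo.2.le⟩
      · rw [if_neg h]; exact ⟨hxIoo.1.le, hxIoo.2⟩
    · rintro ⟨j, hj, rfl⟩
      obtain ⟨hj1, hjk, x, hxIoo, hgx⟩ := wit j hj
      rw [key j hj1 hjk x hxIoo hgx]
      have hpα := (haα (j-1) (by omega)).1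
      have hqβ := (haα j hjk).2
      exact ⟨⟨hpα.trans hxIoo.1.le, hxIoo.2.le.trans hqβ⟩, hgx⟩
  -- injectivity
  have hinj : Set.InjOn (fun j => e (mseq g a (j - 1) +
      (y - g (a (j - 1))) * Real.sign (g (a j) - g (a (j - 1))))) (IdxSet g a k y) := by
    intro j1 hj1 j2 hj2 heq
    obtain ⟨h11, h1k, x1, hx1, hg1⟩ := wit j1 hj1
    obtain ⟨h21, h2k, x2, hx2, hg2⟩ := wit j2 hj2
    simp only at heq
    rw [key j1 h11 h1k x1 hx1 hg1, key j2 h21 h2k x2 hx2 hg2] at heq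
    subst heq
    by_contra hne
    rcases Nat.lt_or_ge j1 j2 with h | h
    · have hle : a j1 ≤ a (j2 - 1) := haLE j1 (j2-1) (by omega) (by omega)
      have := hx1.2
      have := hx2.1
      linarith
    · have hle : a j2 ≤ a (j1 - 1) := haLE j2 (j1-1) (by omega) (by omega)
      have := hx2.2
      have := hx1.1
      linarith
  exact ⟨hseteq, hinj, by rw [hseteq, Set.ncard_image_of_injOn hinj]⟩
end

section
/- Fix i ∈ {0,…,ℓ−1} and decompose the fiber g⁻¹({b_i}) = C_m^i ∪ C_M^i ∪ R^i ∪ E_m^i ∪ E_M^i, where C_m^i (resp. C_M^i) is the set of interior points of [α,β] in the fiber that are strict local minima (resp. strict local maxima) of g, R^i is the set of interior points in the fiber with g′ ≠ 0, and E_m^i (resp. E_M^i) is the set of endpoints α, β in the fiber that are local minima (resp. local maxima) of g. Then for every y ∈ (b_i, b_{i+1}), #I(y) = #g⁻¹({b_i}) + #C_m^i − #C_M^i − #E_M^i. -/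
open Set Filter Topology

lemma aux_neBot_left {c d : ℝ} (hcd : c < d) : (𝓝[Set.Ioo c d] c).NeBot := by
  rw [← mem_closure_iff_nhdsWithin_neBot, closure_Ioo hcd.ne]
  exact ⟨le_rfl, hcd.le⟩

lemma aux_neBot_right {c d : ℝ} (hcd : c < d) : (𝓝[Set.Ioo c d] d).NeBot := by
  rw [← mem_closure_iff_nhdsWithin_neBot, closure_Ioo hcd.ne]
  exact ⟨hcd.le, le_rfl⟩

lemma aux_strictMonoOn_Icc {g : ℝ → ℝ} {c d : ℝ} (hcd : c < d)
    (hg : ContinuousOn g (Set.Icc c d)) (hm : StrictMonoOn g (Set.Ioo c d)) :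
    StrictMonoOn g (Set.Icc c d) := by
  have hcle : ∀ u ∈ Set.Ioo c d, g c ≤ g u := by
    intro u hu
    have hne : (𝓝[Set.Ioo c u] c).NeBot := aux_neBot_left hu.1
    have htend : Filter.Tendsto g (𝓝[Set.Ioo c u] c) (𝓝 (g c)) :=
      (hg c ⟨le_rfl, hcd.le⟩).mono_left (nhdsWithin_mono c
        (fun z hz => ⟨hz.1.le, hz.2.le.trans hu.2.le⟩))
    refine le_of_tendsto htend ?_
    filter_upwards [self_mem_nhdsWithin] with t ht
    exact (hm ⟨ht.1, ht.2.trans hu.2⟩ hu ht.2).le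
  have hled : ∀ u ∈ Set.Ioo c d, g u ≤ g d := by
    intro u hu
    have hne : (𝓝[Set.Ioo u d] d).NeBot := aux_neBot_right hu.2
    have htend : Filter.Tendsto g (𝓝[Set.Ioo u d] d) (𝓝 (g d)) :=
      (hg d ⟨hcd.le, le_rfl⟩).mono_left (nhdsWithin_mono d
        (fun z hz => ⟨hu.1.le.trans hz.1.le, hz.2.le⟩))
    refine ge_of_tendsto htend ?_
    filter_upwards [self_mem_nhdsWithin] with t ht
    exact (hm hu ⟨hu.1.trans ht.1, ht.2⟩ ht.1).le
  intro x hx y hy hxy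
  rcases eq_or_lt_of_le hx.1 with hxc | hxc
  · rcases eq_or_lt_of_le hy.2 with hyd | hyd
    · obtain ⟨u, hu1, hu2⟩ := exists_between hcd
      obtain ⟨v, hv1, hv2⟩ := exists_between hu2
      calc g x = g c := by rw [hxc]
        _ ≤ g u := hcle u ⟨hu1, hu2⟩
        _ < g v := hm ⟨hu1, hu2⟩ ⟨hu1.trans hv1, hv2⟩ hv1
        _ ≤ g d := hled v ⟨hu1.trans hv1, hv2⟩
        _ = g y := by rw [hyd]
    · have hyI : y ∈ Set.Ioo c d := ⟨hxc ▸ hxy, hyd⟩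
      obtain ⟨u, hu1, hu2⟩ := exists_between hyI.1
      calc g x = g c := by rw [hxc]
        _ ≤ g u := hcle u ⟨hu1, hu2.trans hyI.2⟩
        _ < g y := hm ⟨hu1, hu2.trans hyI.2⟩ hyI hu2
  · have hxI : x ∈ Set.Ioo c d := ⟨hxc, lt_of_lt_of_le hxy hy.2⟩
    rcases eq_or_lt_of_le hy.2 with hyd | hyd
    · obtain ⟨v, hv1, hv2⟩ := exists_between (show x < d from hxI.2)
      calc g x < g v := hm hxI ⟨hxI.1.trans hv1, hv2⟩ hv1
        _ ≤ g d := hled v ⟨hxI.1.trans hv1, hv2⟩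
        _ = g y := by rw [hyd]
    · exact hm hxI ⟨hxI.1.trans hxy, hyd⟩ hxy

lemma aux_strictAntiOn_Icc {g : ℝ → ℝ} {c d : ℝ} (hcd : c < d)
    (hg : ContinuousOn g (Set.Icc c d)) (hm : StrictAntiOn g (Set.Ioo c d)) :
    StrictAntiOn g (Set.Icc c d) := by
  have h := aux_strictMonoOn_Icc hcd hg.neg hm.neg
  intro x hx y hy hxy
  simpa using h hx hy hxy

lemma count3 (p q c : ℝ) :
    (if ((p ≤ c ∧ c < q) ∨ (q ≤ c ∧ c < p)) then (1:ℕ) else 0) =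
      (if ((p < c ∧ c < q) ∨ (q < c ∧ c < p)) then 1 else 0) +
      (if (p = c ∧ c < q) then 1 else 0) + (if (q = c ∧ c < p) then 1 else 0) := by
  by_cases H1 : (p ≤ c ∧ c < q) ∨ (q ≤ c ∧ c < p)
  · rw [if_pos H1]
    rcases H1 with ⟨hpc, hcq⟩ | ⟨hqc, hcp⟩
    · rcases hpc.lt_or_eq with h | h
      · rw [if_pos (Or.inl ⟨h, hcq⟩), if_neg (by rintro ⟨h1, h2⟩; linarith),
          if_neg (by rintro ⟨h1, h2⟩; linarith)]
      · rw [if_neg (by rintro (⟨h1, h2⟩ | ⟨h1, h2⟩) <;> linarith),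
          if_pos ⟨h, hcq⟩, if_neg (by rintro ⟨h1, h2⟩; linarith)]
    · rcases hqc.lt_or_eq with h | h
      · rw [if_pos (Or.inr ⟨h, hcp⟩), if_neg (by rintro ⟨h1, h2⟩; linarith),
          if_neg (by rintro ⟨h1, h2⟩; linarith)]
      · rw [if_neg (by rintro (⟨h1, h2⟩ | ⟨h1, h2⟩) <;> linarith),
          if_neg (by rintro ⟨h1, h2⟩; linarith), if_pos ⟨h, hcp⟩]
  · rw [if_neg H1, if_neg, if_neg, if_neg]
    · rintro ⟨h1, h2⟩; exact H1 (Or.inr ⟨h1.le, h2⟩)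
    · rintro ⟨h1, h2⟩; exact H1 (Or.inl ⟨h1.le, h2⟩)
    · rintro (⟨h1, h2⟩ | ⟨h1, h2⟩)
      · exact H1 (Or.inl ⟨h1.le, h2⟩)
      · exact H1 (Or.inr ⟨h1.le, h2⟩)

theorem stmt12
    (α β : ℝ) (hαβ : α < β)
    (k : ℕ) (hk : 0 < k)
    (a : ℕ → ℝ) (ha0 : a 0 = α) (hak : a k = β)
    (hamono : ∀ j < k, a j < a (j + 1))
    (g g' : ℝ → ℝ)
    (hderiv : ∀ x ∈ Set.Icc α β, HasDerivWithinAt g (g' x) (Set.Icc α β) x)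
    (hg'cont : ContinuousOn g' (Set.Icc α β))
    (hpiece : ∀ j, 1 ≤ j → j ≤ k →
      StrictMonoOn g (Set.Ioo (a (j - 1)) (a j)) ∨ StrictAntiOn g (Set.Ioo (a (j - 1)) (a j)))
    (hg'ne : ∀ j, 1 ≤ j → j ≤ k → ∀ x ∈ Set.Ioo (a (j - 1)) (a j), g' x ≠ 0)
    (hcrit : ∀ j, 0 < j → j < k → g' (a j) = 0 ∧
      ((∀ᶠ x in nhdsWithin (a j) (Set.Icc α β \ {a j}), g x < g (a j)) ∨
       (∀ᶠ x in nhdsWithin (a j) (Set.Icc α β \ {a j}), g (a j) < g x)))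
    (ℓ : ℕ) (b : ℕ → ℝ)
    (hbmono : ∀ i < ℓ, b i < b (i + 1))
    (hB : g '' {x | ∃ j ≤ k, a j = x} = {y | ∃ i ≤ ℓ, b i = y})
    (i : ℕ) (hi : i < ℓ)
    (Cm CM R Em EM : Set ℝ)
    (hCm : Cm = {x | x ∈ Set.Ioo α β ∧ g x = b i ∧
      ∀ᶠ z in nhdsWithin x (Set.Icc α β \ {x}), g x < g z})
    (hCM : CM = {x | x ∈ Set.Ioo α β ∧ g x = b i ∧
      ∀ᶠ z in nhdsWithin x (Set.Icc α β \ {x}), g z < g x})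
    (hR : R = {x | x ∈ Set.Ioo α β ∧ g x = b i ∧ g' x ≠ 0})
    (hEm : Em = {x | (x = α ∨ x = β) ∧ g x = b i ∧
      ∀ᶠ z in nhdsWithin x (Set.Icc α β), g x ≤ g z})
    (hEM : EM = {x | (x = α ∨ x = β) ∧ g x = b i ∧
      ∀ᶠ z in nhdsWithin x (Set.Icc α β), g z ≤ g x})
 :
    ∀ y ∈ Set.Ioo (b i) (b (i + 1)),
      ((IdxSet g a k y).ncard : ℤ) =
        ({x ∈ Set.Icc α β | g x = b i}.ncard : ℤ) + Cm.ncard - CM.ncard - EM.ncard := by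
  intro y hy
  classical
  -- ### basic facts
  have hgc : ContinuousOn g (Set.Icc α β) := fun x hx => (hderiv x hx).continuousWithinAt
  have haST : ∀ t ≤ k, ∀ s < t, a s < a t := by
    intro t
    induction t with
    | zero => intro _ s hs; omega
    | succ m ih =>
      intro hmk s hs
      rcases Nat.lt_succ_iff_lt_or_eq.mp hs with h | h
      · exact (ih (by omega) s h).trans (hamono m (by omega))
      · subst h; exact hamono s (by omega)
  have haLE : ∀ t ≤ k, ∀ s ≤ t, a s ≤ a t := by
    intro t htk s hst
    rcases hst.lt_or_eq with h | h
    · exact (haST t htk s h).le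
    · subst h; exact le_rfl
  have hadj : ∀ j, 1 ≤ j → j ≤ k → a (j - 1) < a j := by
    intro j h1 h2
    have := hamono (j - 1) (by omega)
    rwa [Nat.sub_add_cancel h1] at this
  have hsub : ∀ j, 1 ≤ j → j ≤ k → Set.Icc (a (j - 1)) (a j) ⊆ Set.Icc α β := by
    intro j h1 h2
    rw [← ha0, ← hak]
    exact Set.Icc_subset_Icc (haLE (j - 1) (by omega) 0 (by omega)) (haLE k le_rfl j h2)
  have hbLE : ∀ t ≤ ℓ, ∀ s ≤ t, b s ≤ b t := by
    intro t
    induction t with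
    | zero => intro _ s hs; have : s = 0 := by omega
              subst this; exact le_rfl
    | succ m ih =>
      intro hmk s hs
      rcases Nat.lt_succ_iff_lt_or_eq.mp (Nat.lt_succ_of_le hs) with h | h
      · exact (ih (by omega) s (by omega)).trans (hbmono m (by omega)).le
      · subst h; exact le_rfl
  -- node values avoid the gap (b i, b (i+1))
  have hval : ∀ t ≤ k, g (a t) ≤ b i ∨ b (i + 1) ≤ g (a t) := by
    intro t htk
    have hmem : g (a t) ∈ {y | ∃ i ≤ ℓ, b i = y} := by
      rw [← hB]; exact ⟨a t, ⟨t, htk, rfl⟩, rfl⟩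
    obtain ⟨s, hs, hbs⟩ := hmem
    rcases le_or_gt s i with h | h
    · left; rw [← hbs]; exact hbLE i hi.le s h
    · right; rw [← hbs]; exact hbLE s hs (i + 1) h
  have hyne : ∀ t ≤ k, g (a t) ≠ y := by
    intro t htk h
    rcases hval t htk with h' | h'
    · rw [h] at h'; exact absurd hy.1 (not_lt.mpr h')
    · rw [h] at h'; exact absurd hy.2 (not_lt.mpr h')
  -- directions of monotonicity on closed pieces
  set Mo : ℕ → Prop := fun j => StrictMonoOn g (Set.Icc (a (j - 1)) (a j)) with hMoDef
  set An : ℕ → Prop := fun j => StrictAntiOn g (Set.Icc (a (j - 1)) (a j)) with hAnDef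
  have hdir : ∀ j, 1 ≤ j → j ≤ k → Mo j ∨ An j := by
    intro j h1 h2
    rcases hpiece j h1 h2 with h | h
    · exact Or.inl (aux_strictMonoOn_Icc (hadj j h1 h2) (hgc.mono (hsub j h1 h2)) h)
    · exact Or.inr (aux_strictAntiOn_Icc (hadj j h1 h2) (hgc.mono (hsub j h1 h2)) h)
  have hMolt : ∀ j, 1 ≤ j → j ≤ k → Mo j → g (a (j - 1)) < g (a j) := by
    intro j h1 h2 hM
    exact hM ⟨le_rfl, (hadj j h1 h2).le⟩ ⟨(hadj j h1 h2).le, le_rfl⟩ (hadj j h1 h2)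
  have hAnlt : ∀ j, 1 ≤ j → j ≤ k → An j → g (a j) < g (a (j - 1)) := by
    intro j h1 h2 hA
    exact hA ⟨le_rfl, (hadj j h1 h2).le⟩ ⟨(hadj j h1 h2).le, le_rfl⟩ (hadj j h1 h2)
  have hexcl : ∀ j, 1 ≤ j → j ≤ k → ¬ (Mo j ∧ An j) := by
    rintro j h1 h2 ⟨hM, hA⟩
    exact absurd (hMolt j h1 h2 hM) (not_lt.mpr (hAnlt j h1 h2 hA).le)
  -- pieces sit inside [α,β] minus their right node / left node
  have hIooSub : ∀ j, 1 ≤ j → j ≤ k → Set.Ioo (a (j - 1)) (a j) ⊆ Set.Icc α β :=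
    fun j h1 h2 => Set.Ioo_subset_Icc_self.trans (hsub j h1 h2)
  -- helpers: eventual extremum at a node forces directions of adjacent pieces
  have hminL : ∀ t, 1 ≤ t → t ≤ k →
      (∀ᶠ z in nhdsWithin (a t) (Set.Icc α β \ {a t}), g (a t) < g z) → An t := by
    intro t h1 h2 hev
    rcases hdir t h1 h2 with hM | hA
    · exfalso
      have hne : (𝓝[Set.Ioo (a (t - 1)) (a t)] (a t)).NeBot := aux_neBot_right (hadj t h1 h2)
      have hmono : 𝓝[Set.Ioo (a (t - 1)) (a t)] (a t) ≤ 𝓝[Set.Icc α β \ {a t}] (a t) :=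
        nhdsWithin_mono _ (fun z hz => ⟨hIooSub t h1 h2 hz, ne_of_lt hz.2⟩)
      obtain ⟨z, hz1, hz2⟩ := ((hev.filter_mono hmono).and self_mem_nhdsWithin).exists
      exact absurd (hM ⟨hz2.1.le, hz2.2.le⟩ ⟨(hadj t h1 h2).le, le_rfl⟩ hz2.2) (not_lt.mpr hz1.le)
    · exact hA
  have hminR : ∀ t, t < k →
      (∀ᶠ z in nhdsWithin (a t) (Set.Icc α β \ {a t}), g (a t) < g z) → Mo (t + 1) := by
    intro t h2 hev
    have e1 : (t + 1 : ℕ) - 1 = t := rfl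
    rcases hdir (t + 1) (by omega) (by omega) with hM | hA
    · exact hM
    · exfalso
      have hadj' : a t < a (t + 1) := hamono t h2
      have hne : (𝓝[Set.Ioo (a t) (a (t + 1))] (a t)).NeBot := aux_neBot_left hadj'
      have hmono : 𝓝[Set.Ioo (a t) (a (t + 1))] (a t) ≤ 𝓝[Set.Icc α β \ {a t}] (a t) :=
        nhdsWithin_mono _ (fun z hz => ⟨hIooSub (t + 1) (by omega) (by omega) (by rw [e1]; exact hz),
          (ne_of_gt hz.1)⟩)
      obtain ⟨z, hz1, hz2⟩ := ((hev.filter_mono hmono).and self_mem_nhdsWithin).exists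
      have := hA (by rw [e1]; exact ⟨le_rfl, hadj'.le⟩) (by rw [e1]; exact ⟨hz2.1.le, hz2.2.le⟩) hz2.1
      exact absurd this (not_lt.mpr hz1.le)
  have hmaxL : ∀ t, 1 ≤ t → t ≤ k →
      (∀ᶠ z in nhdsWithin (a t) (Set.Icc α β \ {a t}), g z < g (a t)) → Mo t := by
    intro t h1 h2 hev
    rcases hdir t h1 h2 with hM | hA
    · exact hM
    · exfalso
      have hne : (𝓝[Set.Ioo (a (t - 1)) (a t)] (a t)).NeBot := aux_neBot_right (hadj t h1 h2)
      have hmono : 𝓝[Set.Ioo (a (t - 1)) (a t)] (a t) ≤ 𝓝[Set.Icc α β \ {a t}] (a t) :=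
        nhdsWithin_mono _ (fun z hz => ⟨hIooSub t h1 h2 hz, ne_of_lt hz.2⟩)
      obtain ⟨z, hz1, hz2⟩ := ((hev.filter_mono hmono).and self_mem_nhdsWithin).exists
      exact absurd (hA ⟨hz2.1.le, hz2.2.le⟩ ⟨(hadj t h1 h2).le, le_rfl⟩ hz2.2) (not_lt.mpr hz1.le)
  have hmaxR : ∀ t, t < k →
      (∀ᶠ z in nhdsWithin (a t) (Set.Icc α β \ {a t}), g z < g (a t)) → An (t + 1) := by
    intro t h2 hev
    have e1 : (t + 1 : ℕ) - 1 = t := rfl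
    rcases hdir (t + 1) (by omega) (by omega) with hM | hA
    · exfalso
      have hadj' : a t < a (t + 1) := hamono t h2
      have hne : (𝓝[Set.Ioo (a t) (a (t + 1))] (a t)).NeBot := aux_neBot_left hadj'
      have hmono : 𝓝[Set.Ioo (a t) (a (t + 1))] (a t) ≤ 𝓝[Set.Icc α β \ {a t}] (a t) :=
        nhdsWithin_mono _ (fun z hz => ⟨hIooSub (t + 1) (by omega) (by omega) (by rw [e1]; exact hz),
          (ne_of_gt hz.1)⟩)
      obtain ⟨z, hz1, hz2⟩ := ((hev.filter_mono hmono).and self_mem_nhdsWithin).exists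
      have := hM (by rw [e1]; exact ⟨le_rfl, hadj'.le⟩) (by rw [e1]; exact ⟨hz2.1.le, hz2.2.le⟩) hz2.1
      exact absurd this (not_lt.mpr hz1.le)
    · exact hA
  have hdich : ∀ t, 0 < t → t < k → (An t ∧ Mo (t + 1)) ∨ (Mo t ∧ An (t + 1)) := by
    intro t h1 h2
    rcases (hcrit t h1 h2).2 with hev | hev
    · exact Or.inr ⟨hmaxL t h1 (by omega) hev, hmaxR t h2 hev⟩
    · exact Or.inl ⟨hminL t h1 (by omega) hev, hminR t h2 hev⟩
  -- covering of [α,β] by the closed pieces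
  have hcover : ∀ x ∈ Set.Icc α β, ∃ j, 1 ≤ j ∧ j ≤ k ∧ x ∈ Set.Icc (a (j - 1)) (a j) := by
    intro x hx
    have hx0 : a 0 ≤ x := by rw [ha0]; exact hx.1
    have key : ∀ n, 1 ≤ n → n ≤ k → x ≤ a n →
        ∃ j, 1 ≤ j ∧ j ≤ n ∧ x ∈ Set.Icc (a (j - 1)) (a j) := by
      intro n
      induction n with
      | zero => intro h; omega
      | succ m ih =>
        intro _ hnk hxn
        rcases Nat.eq_zero_or_pos m with hm0 | hm1
        · subst hm0
          exact ⟨1, le_rfl, le_rfl, ⟨hx0, hxn⟩⟩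
        · by_cases hxm : x ≤ a m
          · obtain ⟨j, hj1, hj2, hj3⟩ := ih hm1 (by omega) hxm
            exact ⟨j, hj1, by omega, hj3⟩
          · push_neg at hxm
            exact ⟨m + 1, by omega, le_rfl, ⟨hxm.le, hxn⟩⟩
    obtain ⟨j, h1, h2, h3⟩ := key k hk le_rfl (by rw [hak]; exact hx.2)
    exact ⟨j, h1, h2, h3⟩
  -- ### the finsets
  set Tall : Finset ℕ := Finset.range (k + 1) with hTall
  set Jall : Finset ℕ := Finset.Icc 1 k with hJall
  set Jstr : Finset ℕ := Jall.filter (fun j =>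
    (g (a (j - 1)) ≤ b i ∧ b i < g (a j)) ∨ (g (a j) ≤ b i ∧ b i < g (a (j - 1)))) with hJstr
  set Jbet : Finset ℕ := Jall.filter (fun j =>
    (g (a (j - 1)) < b i ∧ b i < g (a j)) ∨ (g (a j) < b i ∧ b i < g (a (j - 1)))) with hJbet
  set JupL : Finset ℕ := Jall.filter (fun j =>
    g (a (j - 1)) = b i ∧ b i < g (a j)) with hJupL
  set JupR : Finset ℕ := Jall.filter (fun j =>
    g (a j) = b i ∧ b i < g (a (j - 1))) with hJupR
  set Nfin : Finset ℕ := Tall.filter (fun t => g (a t) = b i) with hNfin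
  set Cmfin : Finset ℕ := Tall.filter (fun t =>
    0 < t ∧ t < k ∧ g (a t) = b i ∧ An t ∧ Mo (t + 1)) with hCmfin
  set CMfin : Finset ℕ := Tall.filter (fun t =>
    0 < t ∧ t < k ∧ g (a t) = b i ∧ Mo t ∧ An (t + 1)) with hCMfin
  set Emfin : Finset ℕ := Tall.filter (fun t =>
    g (a t) = b i ∧ ((t = 0 ∧ Mo 1) ∨ (t = k ∧ An k))) with hEmfin
  set EMfin : Finset ℕ := Tall.filter (fun t =>
    g (a t) = b i ∧ ((t = 0 ∧ An 1) ∨ (t = k ∧ Mo k))) with hEMfin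
  -- ### E1 : the index set
  have hIdxEq : IdxSet g a k y = ↑Jstr := by
    ext j
    simp only [IdxSet, Set.mem_setOf_eq, Finset.mem_coe, hJstr, Finset.mem_filter, hJall,
      Finset.mem_Icc]
    constructor
    · rintro ⟨h1, h2, x, hx, hgx⟩
      refine ⟨⟨h1, h2⟩, ?_⟩
      have hxI : x ∈ Set.Icc (a (j - 1)) (a j) := by
        split_ifs at hx with hjk
        · subst hjk; exact hx
        · exact ⟨hx.1, hx.2.le⟩
      have hadjj := hadj j h1 h2
      rcases hdir j h1 h2 with hM | hA
      · left
        have hL : g (a (j - 1)) ≤ y := by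
          rcases hxI.1.lt_or_eq with h | h
          · exact (hgx ▸ hM ⟨le_rfl, hadjj.le⟩ hxI h).le
          · rw [← h] at hgx; exact hgx.le
        have hR : y ≤ g (a j) := by
          rcases hxI.2.lt_or_eq with h | h
          · exact (hgx ▸ hM hxI ⟨hadjj.le, le_rfl⟩ h).le
          · rw [h] at hgx; exact hgx.ge
        constructor
        · rcases hval (j - 1) (by omega) with h | h
          · exact h
          · exfalso; have := hy.2; linarith
        · have := hy.1; linarith
      · right
        have hL : y ≤ g (a (j - 1)) := by
          rcases hxI.1.lt_or_eq with h | h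
          · exact (hgx ▸ hA ⟨le_rfl, hadjj.le⟩ hxI h).le
          · rw [← h] at hgx; exact hgx.ge
        have hR : g (a j) ≤ y := by
          rcases hxI.2.lt_or_eq with h | h
          · exact (hgx ▸ hA hxI ⟨hadjj.le, le_rfl⟩ h).le
          · rw [h] at hgx; exact hgx.le
        constructor
        · rcases hval j h2 with h | h
          · exact h
          · exfalso; have := hy.2; linarith
        · have := hy.1; linarith
    · rintro ⟨⟨h1, h2⟩, hstr⟩
      refine ⟨h1, h2, ?_⟩
      have hadjj := hadj j h1 h2
      have hcont : ContinuousOn g (Set.Icc (a (j - 1)) (a j)) := hgc.mono (hsub j h1 h2)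
      have hget : ∃ x ∈ Set.Icc (a (j - 1)) (a j), g x = y := by
        rcases hstr with ⟨hL, hR⟩ | ⟨hL, hR⟩
        · have h2' : b (i + 1) ≤ g (a j) := by
            rcases hval j h2 with h | h
            · exfalso; linarith
            · exact h
          have : y ∈ Set.Icc (g (a (j - 1))) (g (a j)) :=
            ⟨by have := hy.1; linarith, by have := hy.2; linarith⟩
          obtain ⟨x, hxI, hgx⟩ := intermediate_value_Icc hadjj.le hcont this
          exact ⟨x, hxI, hgx⟩
        · have h2' : b (i + 1) ≤ g (a (j - 1)) := by
            rcases hval (j - 1) (by omega) with h | h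
            · exfalso; linarith
            · exact h
          have : y ∈ Set.Icc (g (a j)) (g (a (j - 1))) :=
            ⟨by have := hy.1; linarith, by have := hy.2; linarith⟩
          obtain ⟨x, hxI, hgx⟩ := intermediate_value_Icc' hadjj.le hcont this
          exact ⟨x, hxI, hgx⟩
      obtain ⟨x, hxI, hgx⟩ := hget
      have hne1 : x ≠ a (j - 1) := by
        intro h; exact hyne (j - 1) (by omega) (h ▸ hgx)
      have hne2 : x ≠ a j := by
        intro h; exact hyne j h2 (h ▸ hgx)
      refine ⟨x, ?_, hgx⟩
      split_ifs with hjk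
      · subst hjk; exact hxI
      · exact ⟨hxI.1, lt_of_le_of_ne hxI.2 hne2⟩
  have hE1 : (IdxSet g a k y).ncard = Jstr.card := by
    rw [hIdxEq, Set.ncard_coe_finset]
  -- ### E2 : the fiber over b i
  have hexbet : ∀ j : ℕ, ∃ x : ℝ, (1 ≤ j → j ≤ k →
      ((g (a (j - 1)) < b i ∧ b i < g (a j)) ∨ (g (a j) < b i ∧ b i < g (a (j - 1)))) →
      x ∈ Set.Ioo (a (j - 1)) (a j) ∧ g x = b i) := by
    intro j
    by_cases h : 1 ≤ j ∧ j ≤ k ∧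
      ((g (a (j - 1)) < b i ∧ b i < g (a j)) ∨ (g (a j) < b i ∧ b i < g (a (j - 1))))
    · obtain ⟨h1, h2, hbet⟩ := h
      have hadjj := hadj j h1 h2
      have hcont : ContinuousOn g (Set.Icc (a (j - 1)) (a j)) := hgc.mono (hsub j h1 h2)
      have hget : ∃ x ∈ Set.Icc (a (j - 1)) (a j), g x = b i := by
        rcases hbet with ⟨hL, hR⟩ | ⟨hL, hR⟩
        · obtain ⟨x, hxI, hgx⟩ := intermediate_value_Icc hadjj.le hcont ⟨hL.le, hR.le⟩
          exact ⟨x, hxI, hgx⟩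
        · obtain ⟨x, hxI, hgx⟩ := intermediate_value_Icc' hadjj.le hcont ⟨hL.le, hR.le⟩
          exact ⟨x, hxI, hgx⟩
      obtain ⟨x, hxI, hgx⟩ := hget
      have hne1 : x ≠ a (j - 1) := by
        intro h'; rw [h'] at hgx; rcases hbet with ⟨hL, _⟩ | ⟨_, hR⟩ <;> linarith
      have hne2 : x ≠ a j := by
        intro h'; rw [h'] at hgx; rcases hbet with ⟨_, hR⟩ | ⟨hL, _⟩ <;> linarith
      exact ⟨x, fun _ _ _ => ⟨⟨lt_of_le_of_ne hxI.1 (Ne.symm hne1), lt_of_le_of_ne hxI.2 hne2⟩, hgx⟩⟩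
    · refine ⟨0, fun h1 h2 h3 => absurd ⟨h1, h2, h3⟩ h⟩
  choose xs hxs using hexbet
  set Ffin : Finset ℝ := Nfin.image a ∪ Jbet.image xs with hFfin
  have hmemJbet : ∀ j ∈ Jbet, 1 ≤ j ∧ j ≤ k ∧
      ((g (a (j - 1)) < b i ∧ b i < g (a j)) ∨ (g (a j) < b i ∧ b i < g (a (j - 1)))) := by
    intro j hj
    rw [hJbet, Finset.mem_filter, hJall, Finset.mem_Icc] at hj
    exact ⟨hj.1.1, hj.1.2, hj.2⟩
  have hxsIoo : ∀ j ∈ Jbet, xs j ∈ Set.Ioo (a (j - 1)) (a j) ∧ g (xs j) = b i := by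
    intro j hj
    obtain ⟨h1, h2, h3⟩ := hmemJbet j hj
    exact hxs j h1 h2 h3
  have hFiberEq : {x ∈ Set.Icc α β | g x = b i} = ↑Ffin := by
    ext x
    simp only [Set.mem_setOf_eq, Finset.coe_union, Set.mem_union, Finset.mem_coe,
      Finset.mem_image, hFfin]
    constructor
    · rintro ⟨hxI, hgx⟩
      obtain ⟨j, h1, h2, hxJ⟩ := hcover x hxI
      rcases hxJ.1.eq_or_lt with he | hlt1
      · left
        refine ⟨j - 1, ?_, he⟩
        rw [hNfin, Finset.mem_filter, hTall, Finset.mem_range]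
        exact ⟨by omega, by rw [he]; exact hgx⟩
      rcases hxJ.2.eq_or_lt with he | hlt2
      · left
        refine ⟨j, ?_, he.symm⟩
        rw [hNfin, Finset.mem_filter, hTall, Finset.mem_range]
        exact ⟨by omega, by rw [he] at hgx; exact hgx⟩
      · right
        have hxo : x ∈ Set.Ioo (a (j - 1)) (a j) := ⟨hlt1, hlt2⟩
        have hbet : (g (a (j - 1)) < b i ∧ b i < g (a j)) ∨
            (g (a j) < b i ∧ b i < g (a (j - 1))) := by
          rcases hdir j h1 h2 with hM | hA
          · left
            exact ⟨hgx ▸ hM ⟨le_rfl, (hadj j h1 h2).le⟩ ⟨hlt1.le, hlt2.le⟩ hlt1,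
              hgx ▸ hM ⟨hlt1.le, hlt2.le⟩ ⟨(hadj j h1 h2).le, le_rfl⟩ hlt2⟩
          · right
            exact ⟨hgx ▸ hA ⟨hlt1.le, hlt2.le⟩ ⟨(hadj j h1 h2).le, le_rfl⟩ hlt2,
              hgx ▸ hA ⟨le_rfl, (hadj j h1 h2).le⟩ ⟨hlt1.le, hlt2.le⟩ hlt1⟩
        have hjJ : j ∈ Jbet := by
          rw [hJbet, Finset.mem_filter, hJall, Finset.mem_Icc]
          exact ⟨⟨h1, h2⟩, hbet⟩
        refine ⟨j, hjJ, ?_⟩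
        obtain ⟨hxsI, hxsv⟩ := hxsIoo j hjJ
        -- injectivity on the closed piece
        rcases hdir j h1 h2 with hM | hA
        · exact hM.injOn (Set.Ioo_subset_Icc_self hxsI) ⟨hlt1.le, hlt2.le⟩ (by rw [hxsv, hgx])
        · exact hA.injOn (Set.Ioo_subset_Icc_self hxsI) ⟨hlt1.le, hlt2.le⟩ (by rw [hxsv, hgx])
    · rintro (⟨t, ht, rfl⟩ | ⟨j, hj, rfl⟩)
      · rw [hNfin, Finset.mem_filter, hTall, Finset.mem_range] at ht
        refine ⟨?_, ht.2⟩
        rw [← ha0, ← hak]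
        exact ⟨haLE t (by omega) 0 (by omega), haLE k le_rfl t (by omega)⟩
      · obtain ⟨hxsI, hxsv⟩ := hxsIoo j hj
        obtain ⟨h1, h2, _⟩ := hmemJbet j hj
        exact ⟨hIooSub j h1 h2 hxsI, hxsv⟩
  have haInj : ∀ s ∈ Tall, ∀ t ∈ Tall, a s = a t → s = t := by
    intro s hs t ht he
    rw [hTall, Finset.mem_range] at hs ht
    rcases lt_trichotomy s t with h | h | h
    · exact absurd he (ne_of_lt (haST t (by omega) s h))
    · exact h
    · exact absurd he (ne_of_gt (haST s (by omega) t h))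
  have hE2 : {x ∈ Set.Icc α β | g x = b i}.ncard = Nfin.card + Jbet.card := by
    rw [hFiberEq, Set.ncard_coe_finset]
    rw [Finset.card_union_of_disjoint, Finset.card_image_of_injOn, Finset.card_image_of_injOn]
    · intro j hj j' hj' he
      by_contra hne
      obtain ⟨hI, _⟩ := hxsIoo j hj
      obtain ⟨hI', _⟩ := hxsIoo j' hj'
      obtain ⟨h1, h2, _⟩ := hmemJbet j hj
      obtain ⟨h1', h2', _⟩ := hmemJbet j' hj'
      rcases lt_or_gt_of_ne hne with h | h
      · have : a j ≤ a (j' - 1) := haLE (j' - 1) (by omega) j (by omega)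
        have := hI.2.trans_le (this.trans hI'.1.le)
        rw [he] at this; exact lt_irrefl _ this
      · have : a j' ≤ a (j - 1) := haLE (j - 1) (by omega) j' (by omega)
        have := hI'.2.trans_le (this.trans hI.1.le)
        rw [he] at this; exact lt_irrefl _ this
    · intro s hs t ht he
      exact haInj s (Finset.mem_of_mem_filter s hs) t (Finset.mem_of_mem_filter t ht) he
    · rw [Finset.disjoint_left]
      rintro u hu hu'
      rw [Finset.mem_image] at hu hu'
      obtain ⟨t, ht, rfl⟩ := hu
      obtain ⟨j, hj, he⟩ := hu'
      rw [hNfin, Finset.mem_filter, hTall, Finset.mem_range] at ht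
      obtain ⟨hI, _⟩ := hxsIoo j hj
      obtain ⟨h1, h2, _⟩ := hmemJbet j hj
      rw [he] at hI
      rcases le_or_gt t (j - 1) with h | h
      · exact absurd hI.1 (not_lt.mpr (haLE (j - 1) (by omega) t h))
      · exact absurd hI.2 (not_lt.mpr (haLE t (by omega) j (by omega)))
  -- interior fiber points with an eventual extremum must be nodes
  have hnode : ∀ x ∈ Set.Icc α β,
      ((∀ᶠ z in nhdsWithin x (Set.Icc α β \ {x}), g x < g z) ∨
       (∀ᶠ z in nhdsWithin x (Set.Icc α β \ {x}), g z < g x)) →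
      ∃ t ≤ k, a t = x := by
    intro x hxI hev
    obtain ⟨j, h1, h2, hxJ⟩ := hcover x hxI
    rcases hxJ.1.eq_or_lt with he | hlt1
    · exact ⟨j - 1, by omega, he⟩
    rcases hxJ.2.eq_or_lt with he | hlt2
    · exact ⟨j, h2, he.symm⟩
    exfalso
    have hadjj := hadj j h1 h2
    have hsubL : Set.Ioo (a (j - 1)) x ⊆ Set.Icc α β \ {x} := fun z hz =>
      ⟨hIooSub j h1 h2 ⟨hz.1, hz.2.trans hlt2⟩, ne_of_lt hz.2⟩
    have hsubR : Set.Ioo x (a j) ⊆ Set.Icc α β \ {x} := fun z hz =>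
      ⟨hIooSub j h1 h2 ⟨hlt1.trans hz.1, hz.2⟩, ne_of_gt hz.1⟩
    have hneL : (𝓝[Set.Ioo (a (j - 1)) x] x).NeBot := aux_neBot_right hlt1
    have hneR : (𝓝[Set.Ioo x (a j)] x).NeBot := aux_neBot_left hlt2
    rcases hev with hev | hev
    · rcases hdir j h1 h2 with hM | hA
      · obtain ⟨z, hz1, hz2⟩ :=
          ((hev.filter_mono (nhdsWithin_mono _ hsubL)).and self_mem_nhdsWithin).exists
        have := hM ⟨hz2.1.le, (hz2.2.trans hlt2).le⟩ ⟨hlt1.le, hlt2.le⟩ hz2.2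
        linarith
      · obtain ⟨z, hz1, hz2⟩ :=
          ((hev.filter_mono (nhdsWithin_mono _ hsubR)).and self_mem_nhdsWithin).exists
        have := hA ⟨hlt1.le, hlt2.le⟩ ⟨(hlt1.trans hz2.1).le, hz2.2.le⟩ hz2.1
        linarith
    · rcases hdir j h1 h2 with hM | hA
      · obtain ⟨z, hz1, hz2⟩ :=
          ((hev.filter_mono (nhdsWithin_mono _ hsubR)).and self_mem_nhdsWithin).exists
        have := hM ⟨hlt1.le, hlt2.le⟩ ⟨(hlt1.trans hz2.1).le, hz2.2.le⟩ hz2.1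
        linarith
      · obtain ⟨z, hz1, hz2⟩ :=
          ((hev.filter_mono (nhdsWithin_mono _ hsubL)).and self_mem_nhdsWithin).exists
        have := hA ⟨hz2.1.le, (hz2.2.trans hlt2).le⟩ ⟨hlt1.le, hlt2.le⟩ hz2.2
        linarith
  -- ### E3 : Cm
  have hCmEq : Cm = ↑(Cmfin.image a) := by
    rw [hCm]
    ext x
    simp only [Set.mem_setOf_eq, Finset.coe_image, Set.mem_image, Finset.mem_coe, hCmfin,
      Finset.mem_filter, hTall, Finset.mem_range]
    constructor
    · rintro ⟨hxo, hgx, hev⟩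
      have hxI : x ∈ Set.Icc α β := ⟨hxo.1.le, hxo.2.le⟩
      obtain ⟨t, htk, rfl⟩ := hnode x hxI (Or.inl hev)
      have ht0 : 0 < t := by
        by_contra h
        have : t = 0 := by omega
        rw [this, ha0] at hxo
        exact lt_irrefl _ hxo.1
      have htk' : t < k := by
        by_contra h
        have : t = k := by omega
        rw [this, hak] at hxo
        exact lt_irrefl _ hxo.2
      exact ⟨t, ⟨by omega, ht0, htk', hgx, hminL t ht0 htk hev, hminR t htk' hev⟩, rfl⟩
    · rintro ⟨t, ⟨htk1, ht0, htk, hgx, hA, hM⟩, rfl⟩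
      have h1 : (1:ℕ) ≤ t := ht0
      refine ⟨⟨?_, ?_⟩, hgx, ?_⟩
      · rw [← ha0]; exact haST t (by omega) 0 ht0
      · rw [← hak]; exact haST k le_rfl t htk
      · have hmem : Set.Ioo (a (t - 1)) (a (t + 1)) ∈ 𝓝 (a t) :=
          Ioo_mem_nhds (haST t (by omega) (t - 1) (by omega)) (hamono t htk)
        filter_upwards [mem_nhdsWithin_of_mem_nhds hmem, self_mem_nhdsWithin] with z hz1 hz2
        rcases lt_trichotomy z (a t) with h | h | h
        · exact hA ⟨hz1.1.le, h.le⟩ ⟨(hadj t h1 (by omega)).le, le_rfl⟩ h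
        · exact absurd h hz2.2
        · exact hM ⟨le_rfl, (hamono t htk).le⟩ ⟨h.le, hz1.2.le⟩ h
  -- ### E4 : CM
  have hCMEq : CM = ↑(CMfin.image a) := by
    rw [hCM]
    ext x
    simp only [Set.mem_setOf_eq, Finset.coe_image, Set.mem_image, Finset.mem_coe, hCMfin,
      Finset.mem_filter, hTall, Finset.mem_range]
    constructor
    · rintro ⟨hxo, hgx, hev⟩
      have hxI : x ∈ Set.Icc α β := ⟨hxo.1.le, hxo.2.le⟩
      obtain ⟨t, htk, rfl⟩ := hnode x hxI (Or.inr hev)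
      have ht0 : 0 < t := by
        by_contra h
        have : t = 0 := by omega
        rw [this, ha0] at hxo
        exact lt_irrefl _ hxo.1
      have htk' : t < k := by
        by_contra h
        have : t = k := by omega
        rw [this, hak] at hxo
        exact lt_irrefl _ hxo.2
      exact ⟨t, ⟨by omega, ht0, htk', hgx, hmaxL t ht0 htk hev, hmaxR t htk' hev⟩, rfl⟩
    · rintro ⟨t, ⟨htk1, ht0, htk, hgx, hM, hA⟩, rfl⟩
      have h1 : (1:ℕ) ≤ t := ht0
      refine ⟨⟨?_, ?_⟩, hgx, ?_⟩
      · rw [← ha0]; exact haST t (by omega) 0 ht0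
      · rw [← hak]; exact haST k le_rfl t htk
      · have hmem : Set.Ioo (a (t - 1)) (a (t + 1)) ∈ 𝓝 (a t) :=
          Ioo_mem_nhds (haST t (by omega) (t - 1) (by omega)) (hamono t htk)
        filter_upwards [mem_nhdsWithin_of_mem_nhds hmem, self_mem_nhdsWithin] with z hz1 hz2
        rcases lt_trichotomy z (a t) with h | h | h
        · exact hM ⟨hz1.1.le, h.le⟩ ⟨(hadj t h1 (by omega)).le, le_rfl⟩ h
        · exact absurd h hz2.2
        · exact hA ⟨le_rfl, (hamono t htk).le⟩ ⟨h.le, hz1.2.le⟩ h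
  -- ### E5 : EM
  have ha1 : α < a 1 := by rw [← ha0]; exact hamono 0 hk
  have hak1 : a (k - 1) < β := by rw [← hak]; exact hadj k hk le_rfl
  have hEMEq : EM = ↑(EMfin.image a) := by
    rw [hEM]
    ext x
    simp only [Set.mem_setOf_eq, Finset.coe_image, Set.mem_image, Finset.mem_coe, hEMfin,
      Finset.mem_filter, hTall, Finset.mem_range]
    constructor
    · rintro ⟨hxe, hgx, hev⟩
      rcases hxe with h | h
      · have hx0 : x = a 0 := by rw [h, ha0]
        subst hx0
        refine ⟨0, ⟨by omega, hgx, Or.inl ⟨rfl, ?_⟩⟩, rfl⟩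
        rcases hdir 1 le_rfl hk with hM | hA
        · exfalso
          have hne : (𝓝[Set.Ioo (a 0) (a 1)] (a 0)).NeBot := aux_neBot_left (hamono 0 hk)
          have hmono : 𝓝[Set.Ioo (a 0) (a 1)] (a 0) ≤ 𝓝[Set.Icc α β] (a 0) :=
            nhdsWithin_mono _ (fun z hz => ⟨by rw [← ha0]; exact hz.1.le,
              hz.2.le.trans (by rw [← hak]; exact haLE k le_rfl 1 hk)⟩)
          obtain ⟨z, hz1, hz2⟩ := ((hev.filter_mono hmono).and self_mem_nhdsWithin).exists
          have := hM ⟨le_rfl, (hamono 0 hk).le⟩ ⟨hz2.1.le, hz2.2.le⟩ hz2.1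
          linarith
        · exact hA
      · have hxk : x = a k := by rw [h, hak]
        subst hxk
        refine ⟨k, ⟨by omega, hgx, Or.inr ⟨rfl, ?_⟩⟩, rfl⟩
        rcases hdir k hk le_rfl with hM | hA
        · exact hM
        · exfalso
          have hne : (𝓝[Set.Ioo (a (k - 1)) (a k)] (a k)).NeBot :=
            aux_neBot_right (hadj k hk le_rfl)
          have hmono : 𝓝[Set.Ioo (a (k - 1)) (a k)] (a k) ≤ 𝓝[Set.Icc α β] (a k) :=
            nhdsWithin_mono _ (fun z hz =>
              ⟨by rw [← ha0]; exact (haLE (k - 1) (by omega) 0 (by omega)).trans hz.1.le,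
               by rw [← hak]; exact hz.2.le⟩)
          obtain ⟨z, hz1, hz2⟩ := ((hev.filter_mono hmono).and self_mem_nhdsWithin).exists
          have := hA ⟨hz2.1.le, hz2.2.le⟩ ⟨(hadj k hk le_rfl).le, le_rfl⟩ hz2.2
          linarith
    · rintro ⟨t, ⟨htk1, hgx, hcase⟩, rfl⟩
      rcases hcase with ⟨ht0, hA⟩ | ⟨htk, hM⟩
      · subst ht0
        refine ⟨Or.inl ha0, hgx, ?_⟩
        have hmem : Set.Iio (a 1) ∈ 𝓝 (a 0) := Iio_mem_nhds (hamono 0 hk)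
        filter_upwards [mem_nhdsWithin_of_mem_nhds hmem, self_mem_nhdsWithin] with z hz1 hz2
        have hz0 : a 0 ≤ z := by rw [ha0]; exact hz2.1
        rcases hz0.lt_or_eq with hlt | heq
        · exact (hA ⟨le_rfl, (hadj 1 le_rfl hk).le⟩ ⟨hz0, hz1.le⟩ hlt).le
        · rw [← heq]
      · have htk' := htk.symm
        subst htk'
        refine ⟨Or.inr hak, hgx, ?_⟩
        have hmem : Set.Ioi (a (k - 1)) ∈ 𝓝 (a k) := Ioi_mem_nhds (hadj k hk le_rfl)
        filter_upwards [mem_nhdsWithin_of_mem_nhds hmem, self_mem_nhdsWithin] with z hz1 hz2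
        have hzk : z ≤ a k := by rw [hak]; exact hz2.2
        rcases hzk.lt_or_eq with hlt | heq
        · exact (hM ⟨hz1.le, hzk⟩ ⟨(hadj k hk le_rfl).le, le_rfl⟩ hlt).le
        · rw [heq]
  -- ncard versions
  have hE3 : Cm.ncard = Cmfin.card := by
    rw [hCmEq, Set.ncard_coe_finset, Finset.card_image_of_injOn]
    intro s hs t ht
    exact haInj s (Finset.mem_of_mem_filter s hs) t (Finset.mem_of_mem_filter t ht)
  have hE4 : CM.ncard = CMfin.card := by
    rw [hCMEq, Set.ncard_coe_finset, Finset.card_image_of_injOn]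
    intro s hs t ht
    exact haInj s (Finset.mem_of_mem_filter s hs) t (Finset.mem_of_mem_filter t ht)
  have hE5 : EM.ncard = EMfin.card := by
    rw [hEMEq, Set.ncard_coe_finset, Finset.card_image_of_injOn]
    intro s hs t ht
    exact haInj s (Finset.mem_of_mem_filter s hs) t (Finset.mem_of_mem_filter t ht)
  -- ### counting identities
  have hcardstr : Jstr.card = Jbet.card + JupL.card + JupR.card := by
    rw [hJstr, hJbet, hJupL, hJupR, Finset.card_filter, Finset.card_filter,
      Finset.card_filter, Finset.card_filter, ← Finset.sum_add_distrib,
      ← Finset.sum_add_distrib]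
    exact Finset.sum_congr rfl (fun j _ => count3 (g (a (j - 1))) (g (a j)) (b i))
  have hJupLcard : JupL.card =
      (Tall.filter (fun t => t < k ∧ g (a t) = b i ∧ b i < g (a (t + 1)))).card := by
    refine Finset.card_bij' (fun j _ => j - 1) (fun t _ => t + 1) ?_ ?_ ?_ ?_
    · intro j hj
      rw [hJupL, Finset.mem_filter, hJall, Finset.mem_Icc] at hj
      obtain ⟨⟨h1, h2⟩, h3, h4⟩ := hj
      show j - 1 ∈ Tall.filter (fun t => t < k ∧ g (a t) = b i ∧ b i < g (a (t + 1)))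
      simp only [Finset.mem_filter, hTall, Finset.mem_range]
      have he : j - 1 + 1 = j := by omega
      refine ⟨by omega, by omega, h3, ?_⟩
      rw [he]
      exact h4
    · intro t ht
      simp only [Finset.mem_filter, hTall, Finset.mem_range] at ht
      obtain ⟨h0, h1, h2, h3⟩ := ht
      show t + 1 ∈ JupL
      rw [hJupL, Finset.mem_filter, hJall, Finset.mem_Icc]
      exact ⟨⟨by omega, by omega⟩, h2, h3⟩
    · intro j hj
      rw [hJupL, Finset.mem_filter, hJall, Finset.mem_Icc] at hj
      omega
    · intro t _
      omega
  have hJupRcard : JupR.card =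
      (Tall.filter (fun t => 1 ≤ t ∧ g (a t) = b i ∧ b i < g (a (t - 1)))).card := by
    congr 1
    ext t
    rw [hJupR, Finset.mem_filter, hJall, Finset.mem_Icc, Finset.mem_filter, hTall,
      Finset.mem_range]
    constructor
    · rintro ⟨⟨h1, h2⟩, h3, h4⟩
      exact ⟨by omega, h1, h3, h4⟩
    · rintro ⟨h0, h1, h3, h4⟩
      exact ⟨⟨h1, by omega⟩, h3, h4⟩
  have e10 : (1 : ℕ) - 1 = 0 := rfl
  have hpt : ∀ t ∈ Tall,
      ((if (t < k ∧ g (a t) = b i ∧ b i < g (a (t + 1))) then 1 else 0) +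
       (if (1 ≤ t ∧ g (a t) = b i ∧ b i < g (a (t - 1))) then 1 else 0) : ℕ) =
      2 * (if (0 < t ∧ t < k ∧ g (a t) = b i ∧ An t ∧ Mo (t + 1)) then 1 else 0) +
      (if (g (a t) = b i ∧ ((t = 0 ∧ Mo 1) ∨ (t = k ∧ An k))) then 1 else 0) := by
    intro t ht
    rw [hTall, Finset.mem_range] at ht
    by_cases hP : g (a t) = b i
    · rcases Nat.eq_zero_or_pos t with rfl | ht0
      · -- t = 0
        rw [if_neg (show ¬(1 ≤ 0 ∧ g (a 0) = b i ∧ b i < g (a (0 - 1))) from by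
              rintro ⟨h, _⟩; omega),
          if_neg (show ¬(0 < 0 ∧ 0 < k ∧ g (a 0) = b i ∧ An 0 ∧ Mo (0 + 1)) from by
              rintro ⟨h, _⟩; omega)]
        by_cases hM1 : Mo 1
        · have hlt : b i < g (a (0 + 1)) := by
            have := hMolt 1 le_rfl hk hM1
            rw [e10, hP] at this
            exact this
          rw [if_pos (show (0 < k ∧ g (a 0) = b i ∧ b i < g (a (0 + 1))) from ⟨hk, hP, hlt⟩),
            if_pos (show (g (a 0) = b i ∧ ((0 = 0 ∧ Mo 1) ∨ (0 = k ∧ An k))) from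
              ⟨hP, Or.inl ⟨rfl, hM1⟩⟩)]
        · have hA1 : An 1 := (hdir 1 le_rfl hk).resolve_left hM1
          have hlt : g (a (0 + 1)) < b i := by
            have := hAnlt 1 le_rfl hk hA1
            rw [e10, hP] at this
            exact this
          rw [if_neg (show ¬(0 < k ∧ g (a 0) = b i ∧ b i < g (a (0 + 1))) from by
              rintro ⟨_, _, h⟩; linarith),
            if_neg (show ¬(g (a 0) = b i ∧ ((0 = 0 ∧ Mo 1) ∨ (0 = k ∧ An k))) from by
              rintro ⟨_, (⟨_, hM⟩ | ⟨h0k, _⟩)⟩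
              · exact hM1 hM
              · omega)]
      rcases eq_or_lt_of_le (show t ≤ k by omega) with hkk | htk
      · -- t = k
        rw [if_neg (show ¬(t < k ∧ g (a t) = b i ∧ b i < g (a (t + 1))) from by
              rintro ⟨h, _⟩; omega),
          if_neg (show ¬(0 < t ∧ t < k ∧ g (a t) = b i ∧ An t ∧ Mo (t + 1)) from by
              rintro ⟨_, h, _⟩; omega)]
        by_cases hAk : An t
        · have hlt : b i < g (a (t - 1)) := by
            have := hAnlt t ht0 (by omega) hAk
            rw [hP] at this
            exact this
          rw [if_pos (show (1 ≤ t ∧ g (a t) = b i ∧ b i < g (a (t - 1))) from ⟨ht0, hP, hlt⟩),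
            if_pos (show (g (a t) = b i ∧ ((t = 0 ∧ Mo 1) ∨ (t = k ∧ An k))) from
              ⟨hP, Or.inr ⟨hkk, by rw [← hkk]; exact hAk⟩⟩)]
        · have hMk : Mo t := (hdir t ht0 (by omega)).resolve_right hAk
          have hlt : g (a (t - 1)) < b i := by
            have := hMolt t ht0 (by omega) hMk
            rw [hP] at this
            exact this
          rw [if_neg (show ¬(1 ≤ t ∧ g (a t) = b i ∧ b i < g (a (t - 1))) from by
              rintro ⟨_, _, h⟩; linarith),
            if_neg (show ¬(g (a t) = b i ∧ ((t = 0 ∧ Mo 1) ∨ (t = k ∧ An k))) from by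
              rintro ⟨_, (⟨h0, _⟩ | ⟨_, hA⟩)⟩
              · omega
              · exact hAk (by rw [hkk]; exact hA))]
      · -- interior node
        have hEmf : ¬(g (a t) = b i ∧ ((t = 0 ∧ Mo 1) ∨ (t = k ∧ An k))) := by
          rintro ⟨_, (⟨h0, _⟩ | ⟨hkk, _⟩)⟩ <;> omega
        rcases hdich t ht0 htk with ⟨hA, hM⟩ | ⟨hM, hA⟩
        · have hlt1 : b i < g (a (t + 1)) := by
            have := hMolt (t + 1) (by omega) (by omega) hM
            rw [show (t + 1) - 1 = t from rfl, hP] at this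
            exact this
          have hlt2 : b i < g (a (t - 1)) := by
            have := hAnlt t ht0 (by omega) hA
            rw [hP] at this
            exact this
          rw [if_pos (show (t < k ∧ g (a t) = b i ∧ b i < g (a (t + 1))) from ⟨htk, hP, hlt1⟩),
            if_pos (show (1 ≤ t ∧ g (a t) = b i ∧ b i < g (a (t - 1))) from ⟨ht0, hP, hlt2⟩),
            if_pos (show (0 < t ∧ t < k ∧ g (a t) = b i ∧ An t ∧ Mo (t + 1)) from
              ⟨ht0, htk, hP, hA, hM⟩),
            if_neg hEmf]
        · have hlt1 : g (a (t + 1)) < b i := by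
            have := hAnlt (t + 1) (by omega) (by omega) hA
            rw [show (t + 1) - 1 = t from rfl, hP] at this
            exact this
          have hlt2 : g (a (t - 1)) < b i := by
            have := hMolt t ht0 (by omega) hM
            rw [hP] at this
            exact this
          rw [if_neg (show ¬(t < k ∧ g (a t) = b i ∧ b i < g (a (t + 1))) from by
              rintro ⟨_, _, h⟩; linarith),
            if_neg (show ¬(1 ≤ t ∧ g (a t) = b i ∧ b i < g (a (t - 1))) from by
              rintro ⟨_, _, h⟩; linarith),
            if_neg (show ¬(0 < t ∧ t < k ∧ g (a t) = b i ∧ An t ∧ Mo (t + 1)) from by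
              rintro ⟨_, _, _, hA', _⟩; exact hexcl t ht0 (by omega) ⟨hM, hA'⟩),
            if_neg hEmf]
    · rw [if_neg (show ¬(t < k ∧ g (a t) = b i ∧ b i < g (a (t + 1))) from by
          rintro ⟨_, h, _⟩; exact hP h),
        if_neg (show ¬(1 ≤ t ∧ g (a t) = b i ∧ b i < g (a (t - 1))) from by
          rintro ⟨_, h, _⟩; exact hP h),
        if_neg (show ¬(0 < t ∧ t < k ∧ g (a t) = b i ∧ An t ∧ Mo (t + 1)) from by
          rintro ⟨_, _, h, _⟩; exact hP h),
        if_neg (show ¬(g (a t) = b i ∧ ((t = 0 ∧ Mo 1) ∨ (t = k ∧ An k))) from by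
          rintro ⟨h, _⟩; exact hP h)]
  have hsumUp : JupL.card + JupR.card = 2 * Cmfin.card + Emfin.card := by
    rw [hJupLcard, hJupRcard, hCmfin, hEmfin, Finset.card_filter, Finset.card_filter,
      Finset.card_filter, Finset.card_filter, ← Finset.sum_add_distrib, Finset.mul_sum,
      ← Finset.sum_add_distrib]
    exact Finset.sum_congr rfl hpt
  have hpt2 : ∀ t ∈ Tall,
      ((if g (a t) = b i then 1 else 0) : ℕ) =
      (if (0 < t ∧ t < k ∧ g (a t) = b i ∧ An t ∧ Mo (t + 1)) then 1 else 0) +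
      (if (0 < t ∧ t < k ∧ g (a t) = b i ∧ Mo t ∧ An (t + 1)) then 1 else 0) +
      (if (g (a t) = b i ∧ ((t = 0 ∧ Mo 1) ∨ (t = k ∧ An k))) then 1 else 0) +
      (if (g (a t) = b i ∧ ((t = 0 ∧ An 1) ∨ (t = k ∧ Mo k))) then 1 else 0) := by
    intro t ht
    rw [hTall, Finset.mem_range] at ht
    by_cases hP : g (a t) = b i
    · rw [if_pos hP]
      rcases Nat.eq_zero_or_pos t with rfl | ht0
      · rw [if_neg (show ¬(0 < 0 ∧ 0 < k ∧ g (a 0) = b i ∧ An 0 ∧ Mo (0 + 1)) from by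
              rintro ⟨h, _⟩; omega),
          if_neg (show ¬(0 < 0 ∧ 0 < k ∧ g (a 0) = b i ∧ Mo 0 ∧ An (0 + 1)) from by
              rintro ⟨h, _⟩; omega)]
        by_cases hM1 : Mo 1
        · rw [if_pos (show (g (a 0) = b i ∧ ((0 = 0 ∧ Mo 1) ∨ (0 = k ∧ An k))) from
              ⟨hP, Or.inl ⟨rfl, hM1⟩⟩),
            if_neg (show ¬(g (a 0) = b i ∧ ((0 = 0 ∧ An 1) ∨ (0 = k ∧ Mo k))) from by
              rintro ⟨_, (⟨_, hA⟩ | ⟨h0k, _⟩)⟩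
              · exact hexcl 1 le_rfl hk ⟨hM1, hA⟩
              · omega)]
        · have hA1 : An 1 := (hdir 1 le_rfl hk).resolve_left hM1
          rw [if_neg (show ¬(g (a 0) = b i ∧ ((0 = 0 ∧ Mo 1) ∨ (0 = k ∧ An k))) from by
              rintro ⟨_, (⟨_, hM⟩ | ⟨h0k, _⟩)⟩
              · exact hM1 hM
              · omega),
            if_pos (show (g (a 0) = b i ∧ ((0 = 0 ∧ An 1) ∨ (0 = k ∧ Mo k))) from
              ⟨hP, Or.inl ⟨rfl, hA1⟩⟩)]
      rcases eq_or_lt_of_le (show t ≤ k by omega) with hkk | htk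
      · rw [if_neg (show ¬(0 < t ∧ t < k ∧ g (a t) = b i ∧ An t ∧ Mo (t + 1)) from by
              rintro ⟨_, h, _⟩; omega),
          if_neg (show ¬(0 < t ∧ t < k ∧ g (a t) = b i ∧ Mo t ∧ An (t + 1)) from by
              rintro ⟨_, h, _⟩; omega)]
        by_cases hAk : An t
        · rw [if_pos (show (g (a t) = b i ∧ ((t = 0 ∧ Mo 1) ∨ (t = k ∧ An k))) from
              ⟨hP, Or.inr ⟨hkk, by rw [← hkk]; exact hAk⟩⟩),
            if_neg (show ¬(g (a t) = b i ∧ ((t = 0 ∧ An 1) ∨ (t = k ∧ Mo k))) from by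
              rintro ⟨_, (⟨h0, _⟩ | ⟨_, hM⟩)⟩
              · omega
              · exact hexcl t ht0 (by omega) ⟨by rw [hkk]; exact hM, hAk⟩)]
        · have hMk : Mo t := (hdir t ht0 (by omega)).resolve_right hAk
          rw [if_neg (show ¬(g (a t) = b i ∧ ((t = 0 ∧ Mo 1) ∨ (t = k ∧ An k))) from by
              rintro ⟨_, (⟨h0, _⟩ | ⟨_, hA⟩)⟩
              · omega
              · exact hAk (by rw [hkk]; exact hA)),
            if_pos (show (g (a t) = b i ∧ ((t = 0 ∧ An 1) ∨ (t = k ∧ Mo k))) from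
              ⟨hP, Or.inr ⟨hkk, by rw [← hkk]; exact hMk⟩⟩)]
      · have hEmf : ¬(g (a t) = b i ∧ ((t = 0 ∧ Mo 1) ∨ (t = k ∧ An k))) := by
          rintro ⟨_, (⟨h0, _⟩ | ⟨hkk, _⟩)⟩ <;> omega
        have hEMf : ¬(g (a t) = b i ∧ ((t = 0 ∧ An 1) ∨ (t = k ∧ Mo k))) := by
          rintro ⟨_, (⟨h0, _⟩ | ⟨hkk, _⟩)⟩ <;> omega
        rcases hdich t ht0 htk with ⟨hA, hM⟩ | ⟨hM, hA⟩
        · rw [if_pos (show (0 < t ∧ t < k ∧ g (a t) = b i ∧ An t ∧ Mo (t + 1)) from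
              ⟨ht0, htk, hP, hA, hM⟩),
            if_neg (show ¬(0 < t ∧ t < k ∧ g (a t) = b i ∧ Mo t ∧ An (t + 1)) from by
              rintro ⟨_, _, _, hM', _⟩; exact hexcl t ht0 (by omega) ⟨hM', hA⟩),
            if_neg hEmf, if_neg hEMf]
        · rw [if_neg (show ¬(0 < t ∧ t < k ∧ g (a t) = b i ∧ An t ∧ Mo (t + 1)) from by
              rintro ⟨_, _, _, hA', _⟩; exact hexcl t ht0 (by omega) ⟨hM, hA'⟩),
            if_pos (show (0 < t ∧ t < k ∧ g (a t) = b i ∧ Mo t ∧ An (t + 1)) from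
              ⟨ht0, htk, hP, hM, hA⟩),
            if_neg hEmf, if_neg hEMf]
    · rw [if_neg hP,
        if_neg (show ¬(0 < t ∧ t < k ∧ g (a t) = b i ∧ An t ∧ Mo (t + 1)) from by
          rintro ⟨_, _, h, _⟩; exact hP h),
        if_neg (show ¬(0 < t ∧ t < k ∧ g (a t) = b i ∧ Mo t ∧ An (t + 1)) from by
          rintro ⟨_, _, h, _⟩; exact hP h),
        if_neg (show ¬(g (a t) = b i ∧ ((t = 0 ∧ Mo 1) ∨ (t = k ∧ An k))) from by
          rintro ⟨h, _⟩; exact hP h),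
        if_neg (show ¬(g (a t) = b i ∧ ((t = 0 ∧ An 1) ∨ (t = k ∧ Mo k))) from by
          rintro ⟨h, _⟩; exact hP h)]
  have hNsum : Nfin.card = Cmfin.card + CMfin.card + Emfin.card + EMfin.card := by
    rw [hNfin, hCmfin, hCMfin, hEmfin, hEMfin, Finset.card_filter, Finset.card_filter,
      Finset.card_filter, Finset.card_filter, Finset.card_filter, ← Finset.sum_add_distrib,
      ← Finset.sum_add_distrib, ← Finset.sum_add_distrib]
    exact Finset.sum_congr rfl hpt2
  -- ### conclusion
  rw [hE1, hE2, hE3, hE4, hE5]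
  omega
end
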